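/- arXiv:1503.06843 — 7 statements merged into one kernel-verified Lean document; each statement's English description precedes it below -/
import Mathlib

section
/- Let k ≥ 2 and n ≥ 2k−1 be integers. Then there exists a smooth function u : ℝⁿ → ℝ which is not a polynomial function and which satisfies σ_k(D²u(x)) = 1 for every x ∈ ℝⁿ. -/
set_option linter.unusedSectionVars false

/-- The `k`-th elementary symmetric function of a square real matrix:
the sum of its `k × k` principal minors. -/
noncomputable def sigmaK {ι : Type*} [Fintype ι] [DecidableEq ι] (k : ℕ)
    (A : Matrix ι ι ℝ) : ℝ :=
  ∑ s ∈ (Finset.univ : Finset ι).powersetCard k,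
    Matrix.det (fun i j : {x : ι // x ∈ s} => A i.1 j.1)

/-- The Hessian matrix of `u` at `x`, with entries `∂ᵢ∂ⱼ u (x)`. -/
noncomputable def hessian {ι : Type*} [Fintype ι] [DecidableEq ι]
    (u : (ι → ℝ) → ℝ) (x : ι → ℝ) : Matrix ι ι ℝ :=
  fun i j => fderiv ℝ (fun y => fderiv ℝ u y (Pi.single j 1)) x (Pi.single i 1)

open Real Finset

namespace SigmaKAux

variable (a n : ℕ) [NeZero n]

/-- active index set: indices with value in (0, 2a+3) -/
def Aset : Finset (Fin n) := Finset.univ.filter (fun i => 0 < (i : ℕ) ∧ (i : ℕ) < 2*a+3)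

noncomputable def K1 : ℝ := ((2*a+2).choose (a+1) : ℝ)
noncomputable def K2 : ℝ := ((2*a+2).choose (a+2) : ℝ)

lemma K1_pos : 0 < K1 a := by
  have := Nat.choose_pos (show a+1 ≤ 2*a+2 by omega)
  exact_mod_cast Nat.cast_pos.mpr this
lemma K2_pos : 0 < K2 a := by
  have := Nat.choose_pos (show a+2 ≤ 2*a+2 by omega)
  exact_mod_cast Nat.cast_pos.mpr this

noncomputable def c1 : ℝ := 1 / (((a:ℝ)+1)^2 * K1 a)
noncomputable def c2 : ℝ := -(K2 a / K1 a)

noncomputable def Qf (x : Fin n → ℝ) : ℝ := ∑ i ∈ Aset a n, (x i)^2 / 2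

/-- base family of functions -/
noncomputable def BB (b1 b2 : ℝ) (x : Fin n → ℝ) : ℝ :=
  b1 * Real.exp (-((a:ℝ)+1) * x 0) + b2 * Real.exp (x 0) + Real.exp (x 0) * Qf a n x

/-- the solution -/
noncomputable def uu : (Fin n → ℝ) → ℝ := BB a n (c1 a) (c2 a)

/-- the (0,0) Hessian entry -/
noncomputable def mm (x : Fin n → ℝ) : ℝ :=
  BB a n (c1 a * -((a:ℝ)+1) * -((a:ℝ)+1)) (c2 a) x

/-- the claimed Hessian matrix -/
noncomputable def Mtx (x : Fin n → ℝ) : Matrix (Fin n) (Fin n) ℝ := fun i j =>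
  if j = 0 then
    (if i = 0 then mm a n x else if i ∈ Aset a n then Real.exp (x 0) * x i else 0)
  else if j ∈ Aset a n then
    (if i = 0 then Real.exp (x 0) * x j else if i = j then Real.exp (x 0) else 0)
  else 0

lemma zero_not_mem_Aset : (0 : Fin n) ∉ Aset a n := by
  simp [Aset]

lemma card_Aset (hn : 2*a+3 ≤ n) : (Aset a n).card = 2*a+2 := by
  have : (Aset a n).card = (Finset.Ioo 0 (2*a+3)).card := by
    refine Finset.card_nbij (fun i => (i : ℕ)) ?_ ?_ ?_
    · intro i hi
      rw [Finset.mem_coe] at hi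
      simp only [Aset, mem_filter] at hi
      exact Finset.mem_coe.mpr (Finset.mem_Ioo.mpr ⟨hi.2.1, hi.2.2⟩)
    · intro i _ j _ hij
      exact Fin.val_injective hij
    · intro m hm
      simp only [Finset.coe_Ioo, Set.mem_Ioo] at hm
      refine ⟨⟨m, by omega⟩, ?_, rfl⟩
      exact Finset.mem_coe.mpr (Finset.mem_filter.mpr ⟨Finset.mem_univ _, hm.1, hm.2⟩)
  rw [this, Nat.card_Ioo]
  omega

noncomputable def pr (j : Fin n) : (Fin n → ℝ) →L[ℝ] ℝ :=
  ContinuousLinearMap.proj j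

lemma hasFDerivAt_exp_proj0 (x : Fin n → ℝ) :
    HasFDerivAt (fun y : Fin n → ℝ => Real.exp (y 0))
      (Real.exp (x 0) • pr n 0) x := by
  have h1 : HasDerivAt Real.exp (Real.exp (x 0)) (x 0) := Real.hasDerivAt_exp (x 0)
  exact h1.comp_hasFDerivAt x ((pr n 0).hasFDerivAt)

lemma hasFDerivAt_Qf (x : Fin n → ℝ) :
    HasFDerivAt (Qf a n) (∑ i ∈ Aset a n, x i • pr n i) x := by
  have h : ∀ i ∈ Aset a n, HasFDerivAt (fun y : Fin n → ℝ => (y i)^2/2)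
      (x i • pr n i) x := by
    intro i _
    have := ((pr n i).hasFDerivAt (x := x)).mul ((pr n i).hasFDerivAt (x := x))
    have h2 := this.const_mul ((1:ℝ)/2)
    refine HasFDerivAt.congr_fderiv (h2.congr_of_eventuallyEq (Filter.Eventually.of_forall fun y => ?_)) ?_
    · simp [pr]
      ring
    · ext v
      simp [pr]
      ring
  exact HasFDerivAt.fun_sum h

lemma hasFDerivAt_BB (b1 b2 : ℝ) (x : Fin n → ℝ) :
    HasFDerivAt (BB a n b1 b2)
      ((BB a n (b1 * -((a:ℝ)+1)) b2 x) • pr n 0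
        + Real.exp (x 0) • (∑ i ∈ Aset a n, x i • pr n i)) x := by
  have h1 : HasDerivAt (fun s : ℝ => b1 * Real.exp (-((a:ℝ)+1) * s))
      (b1 * (Real.exp (-((a:ℝ)+1) * x 0) * -((a:ℝ)+1))) (x 0) := by
    have hlin : HasDerivAt (fun s : ℝ => -((a:ℝ)+1) * s) (-((a:ℝ)+1)) (x 0) := by
      simpa using (hasDerivAt_id (x 0)).const_mul (-((a:ℝ)+1))
    exact (hlin.exp).const_mul b1
  have h1' : HasFDerivAt (fun y : Fin n → ℝ => b1 * Real.exp (-((a:ℝ)+1) * y 0))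
      ((b1 * (Real.exp (-((a:ℝ)+1) * x 0) * -((a:ℝ)+1))) • pr n 0) x :=
    HasDerivAt.comp_hasFDerivAt (h₂ := fun s : ℝ => b1 * Real.exp (-((a:ℝ)+1) * s)) x h1 ((pr n 0).hasFDerivAt)
  have h2 : HasDerivAt (fun s : ℝ => b2 * Real.exp s) (b2 * Real.exp (x 0)) (x 0) :=
    (Real.hasDerivAt_exp (x 0)).const_mul b2
  have h2' : HasFDerivAt (fun y : Fin n → ℝ => b2 * Real.exp (y 0))
      ((b2 * Real.exp (x 0)) • pr n 0) x :=
    HasDerivAt.comp_hasFDerivAt (h₂ := fun s : ℝ => b2 * Real.exp s) x h2 ((pr n 0).hasFDerivAt)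
  have h3 : HasFDerivAt (fun y : Fin n → ℝ => Real.exp (y 0) * Qf a n y)
      (Real.exp (x 0) • (∑ i ∈ Aset a n, x i • pr n i)
        + Qf a n x • (Real.exp (x 0) • pr n 0)) x :=
    (hasFDerivAt_exp_proj0 n x).mul (hasFDerivAt_Qf a n x)
  have := (h1'.add h2').add h3
  refine this.congr_fderiv ?_
  ext v
  simp [pr, BB]
  ring

lemma fderiv_BB_single (b1 b2 : ℝ) (x : Fin n → ℝ) (j : Fin n) :
    fderiv ℝ (BB a n b1 b2) x (Pi.single j 1)
      = if j = 0 then BB a n (b1 * -((a:ℝ)+1)) b2 x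
        else if j ∈ Aset a n then Real.exp (x 0) * x j else 0 := by
  rw [(hasFDerivAt_BB a n b1 b2 x).fderiv]
  simp only [ContinuousLinearMap.add_apply, ContinuousLinearMap.smul_apply,
    ContinuousLinearMap.coe_sum', Finset.sum_apply, pr, ContinuousLinearMap.proj_apply,
    smul_eq_mul]
  by_cases hj : j = 0
  · subst hj
    rw [if_pos rfl]
    have hz : ∀ i ∈ Aset a n, x i * (Pi.single (0 : Fin n) (1:ℝ) : Fin n → ℝ) i = 0 := by
      intro i hi
      have : i ≠ 0 := by
        rintro rfl; exact zero_not_mem_Aset a n hi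
      simp [Pi.single_apply, this]
    rw [Finset.sum_congr rfl hz]
    simp
  · rw [if_neg hj]
    have h0 : (Pi.single j (1:ℝ) : Fin n → ℝ) 0 = 0 := by simp [Pi.single_apply, hj]
    rw [h0]
    by_cases hjA : j ∈ Aset a n
    · rw [if_pos hjA]
      have : ∀ i ∈ Aset a n, x i * (Pi.single j (1:ℝ) : Fin n → ℝ) i
          = if i = j then x j else 0 := by
        intro i _
        by_cases h : i = j
        · subst h; simp [Pi.single_apply]
        · simp [Pi.single_apply, h]
      rw [Finset.sum_congr rfl this, Finset.sum_ite_eq' (Aset a n) j, if_pos hjA]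
      ring
    · rw [if_neg hjA]
      have : ∀ i ∈ Aset a n, x i * (Pi.single j (1:ℝ) : Fin n → ℝ) i = 0 := by
        intro i hi
        have : i ≠ j := by rintro rfl; exact hjA hi
        simp [Pi.single_apply, this]
      rw [Finset.sum_congr rfl this]
      simp

lemma hessian_uu (x : Fin n → ℝ) : hessian (uu a n) x = Mtx a n x := by
  funext i j
  show fderiv ℝ (fun y => fderiv ℝ (uu a n) y (Pi.single j 1)) x (Pi.single i 1) = _
  unfold uu
  by_cases hj : j = 0
  · subst hj
    have hfun : (fun y => fderiv ℝ (BB a n (c1 a) (c2 a)) y (Pi.single (0:Fin n) 1))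
        = BB a n (c1 a * -((a:ℝ)+1)) (c2 a) := by
      funext y
      rw [fderiv_BB_single a n (c1 a) (c2 a) y 0, if_pos rfl]
    rw [hfun, fderiv_BB_single a n (c1 a * -((a:ℝ)+1)) (c2 a) x i]
    simp [Mtx, mm]
  · by_cases hjA : j ∈ Aset a n
    · have hfun : (fun y => fderiv ℝ (BB a n (c1 a) (c2 a)) y (Pi.single j 1))
          = (fun y => Real.exp (y 0) * y j) := by
        funext y
        rw [fderiv_BB_single a n (c1 a) (c2 a) y j, if_neg hj, if_pos hjA]
      rw [hfun]
      have hder : HasFDerivAt (fun y : Fin n → ℝ => Real.exp (y 0) * y j)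
          (Real.exp (x 0) • pr n j + x j • (Real.exp (x 0) • pr n 0)) x :=
        (hasFDerivAt_exp_proj0 n x).mul ((pr n j).hasFDerivAt)
      rw [hder.fderiv]
      simp only [ContinuousLinearMap.add_apply, ContinuousLinearMap.smul_apply, pr,
        ContinuousLinearMap.proj_apply, smul_eq_mul, Mtx, if_neg hj, if_pos hjA]
      by_cases hi : i = 0
      · subst hi
        have h1 : (Pi.single (0:Fin n) (1:ℝ) : Fin n → ℝ) j = 0 := by
          simp [Pi.single_apply, Ne.symm hj]
        have h2 : (Pi.single (0:Fin n) (1:ℝ) : Fin n → ℝ) 0 = 1 := by simp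
        rw [h1, h2, if_pos rfl]
        ring
      · have h2 : (Pi.single i (1:ℝ) : Fin n → ℝ) 0 = 0 := by
          simp [Pi.single_apply, hi]
        rw [h2, if_neg hi]
        by_cases hij : i = j
        · subst hij
          simp [Pi.single_apply]
        · have : (Pi.single i (1:ℝ) : Fin n → ℝ) j = 0 := by
            simp [Pi.single_apply, Ne.symm hij]
          rw [this, if_neg hij]
          ring
    · have hfun : (fun y => fderiv ℝ (BB a n (c1 a) (c2 a)) y (Pi.single j 1))
          = (fun _ => (0:ℝ)) := by
        funext y
        rw [fderiv_BB_single a n (c1 a) (c2 a) y j, if_neg hj, if_neg hjA]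
      rw [hfun, fderiv_const_apply]
      simp [Mtx, if_neg hj, if_neg hjA]

lemma det_diag_case (x : Fin n → ℝ) (s : Finset (Fin n)) (hs : s ⊆ Aset a n) :
    Matrix.det (fun i j : {y : Fin n // y ∈ s} => Mtx a n x i.1 j.1)
      = Real.exp (x 0) ^ s.card := by
  have hM : (fun i j : {y : Fin n // y ∈ s} => Mtx a n x i.1 j.1)
      = Matrix.diagonal (fun _ => Real.exp (x 0)) := by
    funext i j
    have hiA : i.1 ∈ Aset a n := hs i.2
    have hjA : j.1 ∈ Aset a n := hs j.2
    have hi0 : i.1 ≠ 0 := by rintro h; rw [h] at hiA; exact zero_not_mem_Aset a n hiA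
    have hj0 : j.1 ≠ 0 := by rintro h; rw [h] at hjA; exact zero_not_mem_Aset a n hjA
    by_cases h : i = j
    · subst h
      simp [Mtx, hj0, hjA, Matrix.diagonal]
    · have h' : i.1 ≠ j.1 := fun hh => h (Subtype.ext hh)
      simp [Mtx, hj0, hjA, hi0, h', Matrix.diagonal_apply_ne _ h]
  rw [hM, Matrix.det_diagonal, Finset.prod_const]
  congr 1
  simp [Fintype.card_coe]

lemma det_zero_case (x : Fin n → ℝ) (s : Finset (Fin n)) (i0 : Fin n)
    (h0 : i0 ∈ s) (hA : i0 ∉ Aset a n) (hz : i0 ≠ 0) :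
    Matrix.det (fun i j : {y : Fin n // y ∈ s} => Mtx a n x i.1 j.1) = 0 := by
  apply Matrix.det_eq_zero_of_row_eq_zero ⟨i0, h0⟩
  intro j
  by_cases hj0 : j.1 = 0
  · simp [Mtx, hj0, hz, hA]
  · by_cases hjA : j.1 ∈ Aset a n
    · have : i0 ≠ j.1 := by rintro rfl; exact hA hjA
      simp [Mtx, hj0, hjA, hz, this]
    · simp [Mtx, hj0, hjA]

lemma det_arrow_case (x : Fin n → ℝ) (s : Finset (Fin n)) (h0 : (0:Fin n) ∈ s)
    (hs : s.erase 0 ⊆ Aset a n) :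
    Matrix.det (fun i j : {y : Fin n // y ∈ s} => Mtx a n x i.1 j.1)
      = Real.exp (x 0) ^ (s.card - 1)
          * (mm a n x - Real.exp (x 0) * ∑ j ∈ s.erase 0, (x j)^2) := by
  classical
  set E := Real.exp (x 0) with hE
  have hEpos : 0 < E := Real.exp_pos _
  -- the reindexing equivalence
  let e : (Unit ⊕ {y : Fin n // y ∈ s.erase 0}) ≃ {y : Fin n // y ∈ s} :=
    { toFun := Sum.elim (fun _ => ⟨0, h0⟩) (fun j => ⟨j.1, Finset.mem_of_mem_erase j.2⟩)
      invFun := fun i => if h : i.1 = 0 then Sum.inl ()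
        else Sum.inr ⟨i.1, Finset.mem_erase.mpr ⟨h, i.2⟩⟩
      left_inv := by
        rintro (u | j)
        · simp
        · have : j.1 ≠ 0 := (Finset.mem_erase.mp j.2).1
          simp [this]
      right_inv := by
        rintro ⟨i, hi⟩
        by_cases h : i = 0
        · subst h; simp
        · simp [h] }
  set Bmat : Matrix Unit {y : Fin n // y ∈ s.erase 0} ℝ := fun _ j => E * x j.1 with hB
  set Cmat : Matrix {y : Fin n // y ∈ s.erase 0} Unit ℝ := fun i _ => E * x i.1 with hC
  refine (Matrix.det_submatrix_equiv_self e (Matrix.of fun i j : {y : Fin n // y ∈ s} => Mtx a n x i.1 j.1)).symm.trans ?_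
  have hblocks : Matrix.submatrix (Matrix.of fun i j : {y : Fin n // y ∈ s} => Mtx a n x i.1 j.1) e e
      = Matrix.fromBlocks (Matrix.of fun _ _ => mm a n x) Bmat Cmat
          (Matrix.diagonal (fun _ : {y : Fin n // y ∈ s.erase 0} => E)) := by
    funext i j
    rcases i with (u | i) <;> rcases j with (u' | j)
    · simp [Matrix.submatrix, e, Mtx]
    · have hjA : j.1 ∈ Aset a n := hs j.2
      have hj0 : j.1 ≠ 0 := (Finset.mem_erase.mp j.2).1
      simp [Matrix.submatrix, e, Mtx, hj0, hjA]
      rfl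
    · have hiA : i.1 ∈ Aset a n := hs i.2
      have hi0 : i.1 ≠ 0 := (Finset.mem_erase.mp i.2).1
      simp [Matrix.submatrix, e, Mtx, hi0, hiA]
      rfl
    · have hjA : j.1 ∈ Aset a n := hs j.2
      have hj0 : j.1 ≠ 0 := (Finset.mem_erase.mp j.2).1
      have hi0 : i.1 ≠ 0 := (Finset.mem_erase.mp i.2).1
      by_cases h : i = j
      · subst h
        simp [Matrix.submatrix, e, Mtx, hj0, hjA]
        rfl
      · have h' : i.1 ≠ j.1 := fun hh => h (Subtype.ext hh)
        simp [Matrix.submatrix, e, Mtx, hj0, hjA, hi0, h',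
          Matrix.diagonal_apply_ne _ h]
  rw [hblocks]
  haveI : Invertible (Matrix.diagonal (fun _ : {y : Fin n // y ∈ s.erase 0} => E)) := by
    refine (Matrix.diagonal _).invertibleOfIsUnitDet ?_
    rw [Matrix.det_diagonal, Finset.prod_const]
    exact (pow_ne_zero _ (ne_of_gt hEpos)).isUnit
  rw [Matrix.det_fromBlocks₂₂]
  have hinv : (⅟(Matrix.diagonal (fun _ : {y : Fin n // y ∈ s.erase 0} => E)))
      = Matrix.diagonal (fun _ => E⁻¹) := by
    apply invOf_eq_right_inv
    rw [Matrix.diagonal_mul_diagonal]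
    simp [mul_inv_cancel₀ (ne_of_gt hEpos)]
  rw [hinv]
  have hdetD : (Matrix.diagonal (fun _ : {y : Fin n // y ∈ s.erase 0} => E)).det
      = E ^ (s.card - 1) := by
    rw [Matrix.det_diagonal, Finset.prod_const]
    congr 1
    simp [Fintype.card_coe, Finset.card_erase_of_mem h0]
  rw [hdetD]
  congr 1
  rw [Matrix.det_unique]
  have : ((Bmat * Matrix.diagonal (fun _ : {y : Fin n // y ∈ s.erase 0} => E⁻¹) * Cmat : Matrix Unit Unit ℝ)) default default
      = E * ∑ j ∈ s.erase 0, (x j)^2 := by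
    rw [Matrix.mul_apply]
    have : ∀ j : {y : Fin n // y ∈ s.erase 0},
        (((Bmat * Matrix.diagonal (fun _ : {y : Fin n // y ∈ s.erase 0} => E⁻¹) : Matrix Unit {y : Fin n // y ∈ s.erase 0} ℝ)) default j) * Cmat j default
        = E * (x j.1)^2 := by
      intro j
      rw [Matrix.mul_apply]
      rw [Finset.sum_eq_single j]
      · simp only [Matrix.diagonal_apply_eq, hB, hC]
        field_simp
      · intro b _ hb
        exact mul_eq_zero.mpr (Or.inr (Matrix.diagonal_apply_ne _ hb))
      · intro h
        exact absurd (Finset.mem_univ j) h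
    rw [Finset.sum_congr rfl (fun j _ => this j)]
    rw [← Finset.mul_sum]
    congr 1
    exact Finset.sum_coe_sort (s.erase 0) (fun j => (x j)^2)
  rw [Matrix.sub_apply, this]
  rfl

lemma card_filter_mem (B : Finset (Fin n)) (r : ℕ) (hr : 1 ≤ r) (j : Fin n) (hj : j ∈ B) :
    ((B.powersetCard r).filter (fun T => j ∈ T)).card
      = ((B.erase j).powersetCard (r-1)).card := by
  refine Finset.card_nbij' (fun T => T.erase j) (fun S => insert j S) ?_ ?_ ?_ ?_
  · intro T hT
    simp only [Finset.mem_coe] at hT ⊢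
    simp only [Finset.mem_filter, Finset.mem_powersetCard] at hT
    obtain ⟨⟨hsub, hcard⟩, hjT⟩ := hT
    rw [Finset.mem_powersetCard]
    constructor
    · exact Finset.erase_subset_erase j hsub
    · rw [Finset.card_erase_of_mem hjT, hcard]
  · intro S hS
    simp only [Finset.mem_coe] at hS ⊢
    rw [Finset.mem_powersetCard] at hS
    obtain ⟨hsub, hcard⟩ := hS
    have hjS : j ∉ S := fun h => (Finset.mem_erase.mp (hsub h)).1 rfl
    simp only [Finset.mem_filter, Finset.mem_powersetCard]
    refine ⟨⟨?_, ?_⟩, Finset.mem_insert_self j S⟩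
    · intro y hy
      rcases Finset.mem_insert.mp hy with h | h
      · subst h; exact hj
      · exact Finset.mem_of_mem_erase (hsub h)
    · rw [Finset.card_insert_of_notMem hjS, hcard]
      omega
  · intro T hT
    simp only [Finset.mem_coe] at hT
    simp only [Finset.mem_filter] at hT
    exact Finset.insert_erase hT.2
  · intro S hS
    simp only [Finset.mem_coe] at hS
    rw [Finset.mem_powersetCard] at hS
    have hjS : j ∉ S := fun h => (Finset.mem_erase.mp (hS.1 h)).1 rfl
    exact Finset.erase_insert hjS

lemma sum_sum_powersetCard (B : Finset (Fin n)) (r : ℕ) (hr : 1 ≤ r) (f : Fin n → ℝ) :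
    ∑ T ∈ B.powersetCard r, ∑ j ∈ T, f j
      = ((B.card - 1).choose (r-1) : ℝ) * ∑ j ∈ B, f j := by
  have step1 : ∀ T ∈ B.powersetCard r, ∑ j ∈ T, f j
      = ∑ j ∈ B, (if j ∈ T then f j else 0) := by
    intro T hT
    rw [Finset.mem_powersetCard] at hT
    rw [Finset.sum_ite_mem, Finset.inter_eq_right.mpr hT.1]
  rw [Finset.sum_congr rfl step1, Finset.sum_comm]
  have step2 : ∀ j ∈ B, ∑ T ∈ B.powersetCard r, (if j ∈ T then f j else 0)
      = ((B.card - 1).choose (r-1) : ℝ) * f j := by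
    intro j hj
    rw [← Finset.sum_filter]
    rw [Finset.sum_const, card_filter_mem n B r hr j hj, Finset.card_powersetCard,
      Finset.card_erase_of_mem hj]
    rw [nsmul_eq_mul]
  rw [Finset.sum_congr rfl step2, ← Finset.mul_sum]

lemma choose_identity : K1 a = 2 * ((2*a+1).choose a : ℝ) := by
  have h1 : (2*a+2).choose (a+1) = (2*a+1).choose a + (2*a+1).choose (a+1) := by
    rw [show 2*a+2 = (2*a+1)+1 by ring]
    exact Nat.choose_succ_succ _ _
  have h2 : (2*a+1).choose (a+1) = (2*a+1).choose a := by
    have := Nat.choose_symm (show a+1 ≤ 2*a+1 by omega)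
    rw [show 2*a+1 - (a+1) = a by omega] at this
    exact this.symm
  rw [K1, h1, h2]
  push_cast
  ring

lemma sigmaK_Mtx (hn : 2*a+3 ≤ n) (x : Fin n → ℝ) :
    sigmaK (a+2) (Mtx a n x) = 1 := by
  classical
  rw [sigmaK]
  rw [← Finset.sum_filter_add_sum_filter_not
    ((Finset.univ : Finset (Fin n)).powersetCard (a+2)) (fun s => (0:Fin n) ∈ s)]
  set E := Real.exp (x 0) with hE
  set S2 := ∑ j ∈ Aset a n, (x j)^2 with hS2
  -- Part 2 : subsets not containing 0
  have part2 : (∑ s ∈ ((Finset.univ : Finset (Fin n)).powersetCard (a+2)).filter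
      (fun s => ¬ (0:Fin n) ∈ s),
      Matrix.det (fun i j : {y : Fin n // y ∈ s} => Mtx a n x i.1 j.1))
      = K2 a * E^(a+2) := by
    have congr1 : ∀ s ∈ ((Finset.univ : Finset (Fin n)).powersetCard (a+2)).filter
        (fun s => ¬ (0:Fin n) ∈ s),
        Matrix.det (fun i j : {y : Fin n // y ∈ s} => Mtx a n x i.1 j.1)
        = if s ⊆ Aset a n then E^(a+2) else 0 := by
      intro s hs
      simp only [Finset.mem_filter, Finset.mem_powersetCard] at hs
      by_cases hsub : s ⊆ Aset a n
      · rw [if_pos hsub, det_diag_case a n x s hsub, hs.1.2, hE]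
      · rw [if_neg hsub]
        obtain ⟨i0, hi0s, hi0A⟩ := Finset.not_subset.mp hsub
        have hi00 : i0 ≠ 0 := fun h => hs.2 (h ▸ hi0s)
        exact det_zero_case a n x s i0 hi0s hi0A hi00
    rw [Finset.sum_congr rfl congr1, ← Finset.sum_filter]
    have hset : ((((Finset.univ : Finset (Fin n)).powersetCard (a+2)).filter
        (fun s => ¬ (0:Fin n) ∈ s)).filter (fun s => s ⊆ Aset a n))
        = (Aset a n).powersetCard (a+2) := by
      ext s
      simp only [Finset.mem_filter, Finset.mem_powersetCard]
      constructor
      · rintro ⟨⟨⟨_, hcard⟩, _⟩, hsub⟩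
        exact ⟨hsub, hcard⟩
      · rintro ⟨hsub, hcard⟩
        refine ⟨⟨⟨Finset.subset_univ s, hcard⟩, ?_⟩, hsub⟩
        intro h0
        exact zero_not_mem_Aset a n (hsub h0)
    rw [hset, Finset.sum_const, Finset.card_powersetCard, card_Aset a n hn,
      nsmul_eq_mul, K2]
  -- Part 1 : subsets containing 0
  have part1 : (∑ s ∈ ((Finset.univ : Finset (Fin n)).powersetCard (a+2)).filter
      (fun s => (0:Fin n) ∈ s),
      Matrix.det (fun i j : {y : Fin n // y ∈ s} => Mtx a n x i.1 j.1))
      = K1 a * (E^(a+1) * mm a n x)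
        - E^(a+2) * (((2*a+1).choose a : ℝ) * S2) := by
    have congr1 : ∀ s ∈ ((Finset.univ : Finset (Fin n)).powersetCard (a+2)).filter
        (fun s => (0:Fin n) ∈ s),
        Matrix.det (fun i j : {y : Fin n // y ∈ s} => Mtx a n x i.1 j.1)
        = if s.erase 0 ⊆ Aset a n
            then E^(a+1) * (mm a n x - E * ∑ j ∈ s.erase 0, (x j)^2) else 0 := by
      intro s hs
      simp only [Finset.mem_filter, Finset.mem_powersetCard] at hs
      by_cases hsub : s.erase 0 ⊆ Aset a n
      · rw [if_pos hsub, det_arrow_case a n x s hs.2 hsub, hs.1.2, hE]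
        norm_num
      · rw [if_neg hsub]
        obtain ⟨i0, hi0s, hi0A⟩ := Finset.not_subset.mp hsub
        have hi00 : i0 ≠ 0 := (Finset.mem_erase.mp hi0s).1
        exact det_zero_case a n x s i0 (Finset.mem_of_mem_erase hi0s) hi0A hi00
    rw [Finset.sum_congr rfl congr1, ← Finset.sum_filter]
    have hbij : (∑ s ∈ ((((Finset.univ : Finset (Fin n)).powersetCard (a+2)).filter
        (fun s => (0:Fin n) ∈ s)).filter (fun s => s.erase 0 ⊆ Aset a n)),
        E^(a+1) * (mm a n x - E * ∑ j ∈ s.erase 0, (x j)^2))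
        = ∑ T ∈ (Aset a n).powersetCard (a+1),
            E^(a+1) * (mm a n x - E * ∑ j ∈ T, (x j)^2) := by
      refine Finset.sum_nbij' (fun s => s.erase 0) (fun T => insert 0 T) ?_ ?_ ?_ ?_ ?_
      · intro s hs
        simp only [Finset.mem_filter, Finset.mem_powersetCard] at hs
        rw [Finset.mem_powersetCard]
        refine ⟨hs.2, ?_⟩
        rw [Finset.card_erase_of_mem hs.1.2, hs.1.1.2]
        omega
      · intro T hT
        rw [Finset.mem_powersetCard] at hT
        have h0T : (0 : Fin n) ∉ T := fun h => zero_not_mem_Aset a n (hT.1 h)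
        simp only [Finset.mem_filter, Finset.mem_powersetCard]
        refine ⟨⟨⟨Finset.subset_univ _, ?_⟩, Finset.mem_insert_self _ _⟩, ?_⟩
        · rw [Finset.card_insert_of_notMem h0T, hT.2]
        · rw [Finset.erase_insert h0T]
          exact hT.1
      · intro s hs
        simp only [Finset.mem_filter] at hs
        exact Finset.insert_erase hs.1.2
      · intro T hT
        rw [Finset.mem_powersetCard] at hT
        have h0T : (0 : Fin n) ∉ T := fun h => zero_not_mem_Aset a n (hT.1 h)
        exact Finset.erase_insert h0T
      · intro s _
        rfl
    rw [hbij]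
    have expand : ∀ T ∈ (Aset a n).powersetCard (a+1),
        E^(a+1) * (mm a n x - E * ∑ j ∈ T, (x j)^2)
        = E^(a+1) * mm a n x - E^(a+2) * ∑ j ∈ T, (x j)^2 := by
      intro T _
      rw [pow_succ]
      ring
    rw [Finset.sum_congr rfl expand, Finset.sum_sub_distrib, Finset.sum_const,
      Finset.card_powersetCard, card_Aset a n hn, ← Finset.mul_sum,
      sum_sum_powersetCard n (Aset a n) (a+1) (by omega), card_Aset a n hn]
    simp only [show 2*a+2-1 = 2*a+1 by omega, show a+1-1 = a by omega,
      nsmul_eq_mul, K1, hS2]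
  rw [part1, part2]
  -- final algebra
  have hm : mm a n x = c1 a * -((a:ℝ)+1) * -((a:ℝ)+1) * Real.exp (-((a:ℝ)+1) * x 0)
      + c2 a * E + E * Qf a n x := rfl
  have hQ : Qf a n x = S2 / 2 := by
    rw [Qf, hS2, Finset.sum_div]
  have hexp : E^(a+1) * Real.exp (-((a:ℝ)+1) * x 0) = 1 := by
    rw [hE, ← Real.exp_nat_mul, ← Real.exp_add]
    push_cast
    rw [show ((a:ℝ)+1) * x 0 + -((a:ℝ)+1) * x 0 = 0 by ring, Real.exp_zero]
  have hK1 : K1 a ≠ 0 := ne_of_gt (K1_pos a)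
  have ha1 : ((a:ℝ)+1) ≠ 0 := by positivity
  have hc1 : c1 a * -((a:ℝ)+1) * -((a:ℝ)+1) * K1 a = 1 := by
    rw [c1]
    field_simp
  have hc2 : K1 a * c2 a = -K2 a := by
    rw [c2]
    field_simp
  have hch := choose_identity a
  rw [hm, hQ]
  set X := Real.exp (-((a:ℝ)+1) * x 0) with hX
  set C := ((2*a+1).choose a : ℝ) with hC
  rw [show E^(a+2) = E^(a+1) * E from pow_succ E (a+1)]
  linear_combination (E^(a+1) * X) * hc1 + hexp + (E^(a+1) * E) * hc2
    + (E^(a+1) * E * S2 / 2) * hch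

lemma contDiff_uu : ContDiff ℝ (⊤ : ℕ∞) (uu a n) := by
  have h0 : ContDiff ℝ (⊤ : ℕ∞) (fun y : Fin n → ℝ => y 0) := (pr n 0).contDiff
  have hexp0 : ContDiff ℝ (⊤ : ℕ∞) (fun y : Fin n → ℝ => Real.exp (y 0)) :=
    Real.contDiff_exp.comp h0
  have h1 : ContDiff ℝ (⊤ : ℕ∞) (fun y : Fin n → ℝ => c1 a * Real.exp (-((a:ℝ)+1) * y 0)) :=
    contDiff_const.mul (Real.contDiff_exp.comp (contDiff_const.mul h0))
  have h2 : ContDiff ℝ (⊤ : ℕ∞) (fun y : Fin n → ℝ => c2 a * Real.exp (y 0)) :=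
    contDiff_const.mul hexp0
  have hQ : ContDiff ℝ (⊤ : ℕ∞) (Qf a n) := by
    apply ContDiff.sum
    intro i _
    exact (((pr n i).contDiff).pow 2).div_const 2
  exact (h1.add h2).add (hexp0.mul hQ)

lemma uu_single (t : ℝ) :
    uu a n (Pi.single 0 t) = c1 a * Real.exp (-((a:ℝ)+1) * t) + c2 a * Real.exp t := by
  have hQ : Qf a n (Pi.single 0 t) = 0 := by
    rw [Qf]
    apply Finset.sum_eq_zero
    intro i hi
    have : i ≠ 0 := by rintro rfl; exact zero_not_mem_Aset a n hi
    simp [Pi.single_apply, this]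
  show BB a n (c1 a) (c2 a) (Pi.single 0 t) = _
  rw [BB, hQ]
  simp

lemma c2_neg : c2 a < 0 := by
  rw [c2]
  have h := div_pos (K2_pos a) (K1_pos a)
  linarith

lemma not_poly :
    ¬ ∃ p : MvPolynomial (Fin n) ℝ, ∀ x, uu a n x = MvPolynomial.eval x p := by
  rintro ⟨p, hp⟩
  set q : Polynomial ℝ :=
    MvPolynomial.aeval (fun i : Fin n => if i = 0 then Polynomial.X else 0) p with hqdef
  have hq : ∀ t : ℝ, q.eval t = uu a n (Pi.single 0 t) := by
    intro t
    have h1 := MvPolynomial.comp_aeval_apply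
      (fun i : Fin n => if i = 0 then (Polynomial.X : Polynomial ℝ) else 0)
      (Polynomial.aeval t) p
    have h2 : (fun i : Fin n => Polynomial.aeval t
        (if i = 0 then (Polynomial.X : Polynomial ℝ) else 0)) = Pi.single 0 t := by
      funext i
      by_cases h : i = 0
      · subst h; simp
      · simp [h, Pi.single_apply]
    rw [h2] at h1
    have h3 : Polynomial.aeval t q = q.eval t := by
      rw [Polynomial.coe_aeval_eq_eval]
    have h4 : MvPolynomial.aeval (Pi.single (0:Fin n) t) p
        = MvPolynomial.eval (Pi.single (0:Fin n) t) p := by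
      rw [← MvPolynomial.coe_aeval_eq_eval]
      rfl
    rw [h3, h4] at h1
    rw [h1, hp]
  -- the restriction is c1 e^{-(a+1)t} + c2 e^t
  have hfun : (fun t : ℝ => q.eval t / Real.exp t)
      = (fun t : ℝ => c1 a * (Real.exp (-((a:ℝ)+1) * t) / Real.exp t) + c2 a) := by
    funext t
    rw [hq, uu_single]
    have hE : Real.exp t ≠ 0 := Real.exp_ne_zero t
    field_simp
  have l1 : Filter.Tendsto (fun t : ℝ => (((a:ℝ)+2)) * t) Filter.atTop Filter.atTop :=
    Filter.Tendsto.const_mul_atTop (by positivity) Filter.tendsto_id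
  have l2 : Filter.Tendsto (fun t : ℝ => -((((a:ℝ)+2)) * t)) Filter.atTop Filter.atBot :=
    Filter.tendsto_neg_atTop_atBot.comp l1
  have l3 : Filter.Tendsto (fun t : ℝ => Real.exp (-((a:ℝ)+1) * t) / Real.exp t)
      Filter.atTop (nhds 0) := by
    have heq : (fun t : ℝ => Real.exp (-((a:ℝ)+1) * t) / Real.exp t)
        = (fun t : ℝ => Real.exp (-((((a:ℝ)+2)) * t))) := by
      funext t
      rw [← Real.exp_sub]
      ring_nf
    rw [heq]
    exact Real.tendsto_exp_atBot.comp l2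
  have l4 : Filter.Tendsto (fun t : ℝ => q.eval t / Real.exp t)
      Filter.atTop (nhds (c2 a)) := by
    rw [hfun]
    have := (l3.const_mul (c1 a)).add (tendsto_const_nhds (x := c2 a))
    simpa using this
  have l5 := Polynomial.tendsto_div_exp_atTop q
  have : c2 a = 0 := tendsto_nhds_unique l4 l5
  exact absurd this (ne_of_lt (c2_neg a))

end SigmaKAux

/-- For integers `k ≥ 2` and `n ≥ 2k - 1`, there exists a smooth, non-polynomial
entire solution of `σ_k(D²u) = 1` on `ℝⁿ`. -/
theorem nonpolynomial_entire_solution_sigmaK (n k : ℕ) (hk : 2 ≤ k) (hn : 2 * k - 1 ≤ n) :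
    ∃ u : (Fin n → ℝ) → ℝ, ContDiff ℝ (⊤ : ℕ∞) u ∧
      (¬ ∃ p : MvPolynomial (Fin n) ℝ, ∀ x, u x = MvPolynomial.eval x p) ∧
      (∀ x, sigmaK k (hessian u x) = 1) := by
  obtain ⟨a, rfl⟩ : ∃ a, k = a + 2 := ⟨k - 2, by omega⟩
  have hn' : 2*a+3 ≤ n := by omega
  haveI : NeZero n := ⟨by omega⟩
  refine ⟨SigmaKAux.uu a n, SigmaKAux.contDiff_uu a n, SigmaKAux.not_poly a n, ?_⟩
  intro x
  rw [SigmaKAux.hessian_uu a n x]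
  exact SigmaKAux.sigmaK_Mtx a n hn' x
end

section
/- For every integer n ≥ 3, there exists a smooth function u : ℝⁿ → ℝ which is not a polynomial function and which satisfies σ₂(D²u(x)) = 1 for every x ∈ ℝⁿ. -/
/-! ### Auxiliary lemmas -/

section Aux

variable {n : ℕ}

/-- Warren's example `u(x) = e^{x₂}(x₀² + x₁²)/2 - sinh x₂`. -/
noncomputable def myU (i0 i1 i2 : Fin n) : (Fin n → ℝ) → ℝ :=
  fun y => Real.exp (y i2) * ((y i0)^2 + (y i1)^2) / 2 - Real.sinh (y i2)

noncomputable def pr (i : Fin n) : (Fin n → ℝ) →L[ℝ] ℝ := ContinuousLinearMap.proj i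

lemma pr_apply (i : Fin n) (v : Fin n → ℝ) : pr i v = v i := rfl

noncomputable def myL (i0 i1 i2 : Fin n) (y : Fin n → ℝ) : (Fin n → ℝ) →L[ℝ] ℝ :=
  (Real.exp (y i2) * y i0) • pr i0 + (Real.exp (y i2) * y i1) • pr i1
    + (Real.exp (y i2) * ((y i0)^2 + (y i1)^2) / 2 - Real.cosh (y i2)) • pr i2

lemma hasFDerivAt_myU (i0 i1 i2 : Fin n) (y : Fin n → ℝ) :
    HasFDerivAt (myU i0 i1 i2) (myL i0 i1 i2 y) y := by
  have h0 : HasFDerivAt (fun y : Fin n → ℝ => y i0) (pr i0) y := (pr i0).hasFDerivAt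
  have h1 : HasFDerivAt (fun y : Fin n → ℝ => y i1) (pr i1) y := (pr i1).hasFDerivAt
  have h2 : HasFDerivAt (fun y : Fin n → ℝ => y i2) (pr i2) y := (pr i2).hasFDerivAt
  have hexp : HasFDerivAt (fun y : Fin n → ℝ => Real.exp (y i2))
      (Real.exp (y i2) • pr i2) y :=
    (Real.hasDerivAt_exp (y i2)).comp_hasFDerivAt (h₂ := Real.exp) y h2
  have hsinh : HasFDerivAt (fun y : Fin n → ℝ => Real.sinh (y i2))
      (Real.cosh (y i2) • pr i2) y :=
    (Real.hasDerivAt_sinh (y i2)).comp_hasFDerivAt (h₂ := Real.sinh) y h2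
  have hsq0 : HasFDerivAt (fun y : Fin n → ℝ => (y i0)^2)
      ((y i0) • pr i0 + (y i0) • pr i0) y := by simpa [sq, Pi.mul_def] using h0.mul h0
  have hsq1 : HasFDerivAt (fun y : Fin n → ℝ => (y i1)^2)
      ((y i1) • pr i1 + (y i1) • pr i1) y := by simpa [sq, Pi.mul_def] using h1.mul h1
  have h := (((hexp.mul (hsq0.add hsq1)).mul_const (2:ℝ)⁻¹).sub hsinh)
  have h : HasFDerivAt (fun y : Fin n → ℝ =>
      Real.exp (y i2) * ((y i0)^2 + (y i1)^2) * (2:ℝ)⁻¹ - Real.sinh (y i2)) (_ : (Fin n → ℝ) →L[ℝ] ℝ) y := h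
  have heq : myU i0 i1 i2 = fun y : Fin n → ℝ =>
      Real.exp (y i2) * ((y i0)^2 + (y i1)^2) * (2:ℝ)⁻¹ - Real.sinh (y i2) := by
    funext y; simp [myU, div_eq_mul_inv]
  rw [heq]
  convert h using 1
  ext v
  simp [myL, pr_apply, ContinuousLinearMap.add_apply, ContinuousLinearMap.smul_apply]
  ring

noncomputable def myG (i0 i1 i2 : Fin n) (c0 c1 c2 : ℝ) : (Fin n → ℝ) → ℝ :=
  fun y => Real.exp (y i2) * y i0 * c0 + Real.exp (y i2) * y i1 * c1
    + (Real.exp (y i2) * ((y i0)^2 + (y i1)^2) / 2 - Real.cosh (y i2)) * c2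

noncomputable def myM (i0 i1 i2 : Fin n) (c0 c1 c2 : ℝ) (x : Fin n → ℝ) :
    (Fin n → ℝ) →L[ℝ] ℝ :=
  (c0 * Real.exp (x i2) + c2 * Real.exp (x i2) * x i0) • pr i0
  + (c1 * Real.exp (x i2) + c2 * Real.exp (x i2) * x i1) • pr i1
  + (c0 * Real.exp (x i2) * x i0 + c1 * Real.exp (x i2) * x i1
      + c2 * (Real.exp (x i2) * ((x i0)^2 + (x i1)^2) / 2 - Real.sinh (x i2))) • pr i2

lemma hasFDerivAt_myG (i0 i1 i2 : Fin n) (c0 c1 c2 : ℝ) (x : Fin n → ℝ) :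
    HasFDerivAt (myG i0 i1 i2 c0 c1 c2) (myM i0 i1 i2 c0 c1 c2 x) x := by
  have h0 : HasFDerivAt (fun y : Fin n → ℝ => y i0) (pr i0) x := (pr i0).hasFDerivAt
  have h1 : HasFDerivAt (fun y : Fin n → ℝ => y i1) (pr i1) x := (pr i1).hasFDerivAt
  have h2 : HasFDerivAt (fun y : Fin n → ℝ => y i2) (pr i2) x := (pr i2).hasFDerivAt
  have hexp : HasFDerivAt (fun y : Fin n → ℝ => Real.exp (y i2))
      (Real.exp (x i2) • pr i2) x :=
    (Real.hasDerivAt_exp (x i2)).comp_hasFDerivAt (h₂ := Real.exp) x h2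
  have hcosh : HasFDerivAt (fun y : Fin n → ℝ => Real.cosh (y i2))
      (Real.sinh (x i2) • pr i2) x :=
    (Real.hasDerivAt_cosh (x i2)).comp_hasFDerivAt (h₂ := Real.cosh) x h2
  have hsq0 : HasFDerivAt (fun y : Fin n → ℝ => (y i0)^2)
      ((x i0) • pr i0 + (x i0) • pr i0) x := by simpa [sq, Pi.mul_def] using h0.mul h0
  have hsq1 : HasFDerivAt (fun y : Fin n → ℝ => (y i1)^2)
      ((x i1) • pr i1 + (x i1) • pr i1) x := by simpa [sq, Pi.mul_def] using h1.mul h1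
  have h := ((((hexp.mul h0).mul_const c0).add ((hexp.mul h1).mul_const c1)).add
    (((((hexp.mul (hsq0.add hsq1)).mul_const (2:ℝ)⁻¹)).sub hcosh).mul_const c2))
  have h : HasFDerivAt (fun y : Fin n → ℝ =>
      (Real.exp (y i2) * y i0 * c0 + Real.exp (y i2) * y i1 * c1)
      + (Real.exp (y i2) * ((y i0)^2 + (y i1)^2) * (2:ℝ)⁻¹ - Real.cosh (y i2)) * c2) (_ : (Fin n → ℝ) →L[ℝ] ℝ) x := h
  have heq : myG i0 i1 i2 c0 c1 c2 = fun y : Fin n → ℝ =>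
      (Real.exp (y i2) * y i0 * c0 + Real.exp (y i2) * y i1 * c1)
      + (Real.exp (y i2) * ((y i0)^2 + (y i1)^2) * (2:ℝ)⁻¹ - Real.cosh (y i2)) * c2 := by
    funext y; simp [myG, div_eq_mul_inv]
  rw [heq]
  convert h using 1
  ext v
  simp [myM, pr_apply, ContinuousLinearMap.add_apply, ContinuousLinearMap.smul_apply]
  ring

lemma inner_fderiv (i0 i1 i2 : Fin n) (j : Fin n) :
    (fun y => fderiv ℝ (myU i0 i1 i2) y (Pi.single j 1)) =
      myG i0 i1 i2 ((Pi.single j 1 : Fin n → ℝ) i0) ((Pi.single j 1 : Fin n → ℝ) i1) ((Pi.single j 1 : Fin n → ℝ) i2) := by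
  funext y
  rw [(hasFDerivAt_myU i0 i1 i2 y).fderiv]
  simp [myL, myG, pr_apply, ContinuousLinearMap.add_apply, ContinuousLinearMap.smul_apply]

lemma hess_entry (i0 i1 i2 : Fin n) (x : Fin n → ℝ) (i j : Fin n) :
    hessian (myU i0 i1 i2) x i j =
      ((Pi.single j 1 : Fin n → ℝ) i0 * Real.exp (x i2)
          + (Pi.single j 1 : Fin n → ℝ) i2 * Real.exp (x i2) * x i0) * (Pi.single i 1 : Fin n → ℝ) i0
      + ((Pi.single j 1 : Fin n → ℝ) i1 * Real.exp (x i2)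
          + (Pi.single j 1 : Fin n → ℝ) i2 * Real.exp (x i2) * x i1) * (Pi.single i 1 : Fin n → ℝ) i1
      + ((Pi.single j 1 : Fin n → ℝ) i0 * Real.exp (x i2) * x i0
          + (Pi.single j 1 : Fin n → ℝ) i1 * Real.exp (x i2) * x i1
          + (Pi.single j 1 : Fin n → ℝ) i2 * (Real.exp (x i2) * ((x i0)^2 + (x i1)^2) / 2
              - Real.sinh (x i2))) * (Pi.single i 1 : Fin n → ℝ) i2 := by
  show fderiv ℝ (fun y => fderiv ℝ (myU i0 i1 i2) y (Pi.single j 1)) x (Pi.single i 1) = _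
  rw [inner_fderiv, (hasFDerivAt_myG i0 i1 i2 _ _ _ x).fderiv]
  simp [myM, pr_apply, ContinuousLinearMap.add_apply, ContinuousLinearMap.smul_apply]

lemma det_pair {ι : Type*} [DecidableEq ι] (A : Matrix ι ι ℝ) (a b : ι) (hab : a ≠ b) :
    Matrix.det (fun i j : {x : ι // x ∈ ({a, b} : Finset ι)} => A i.1 j.1)
      = A a a * A b b - A a b * A b a := by
  have ha : a ∈ ({a, b} : Finset ι) := by simp
  have hb : b ∈ ({a, b} : Finset ι) := by simp
  let e : Fin 2 ≃ {x : ι // x ∈ ({a, b} : Finset ι)} :=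
  { toFun := ![⟨a, ha⟩, ⟨b, hb⟩]
    invFun := fun z => if z.1 = a then 0 else 1
    left_inv := by
      intro i; fin_cases i <;> simp [hab.symm]
    right_inv := by
      rintro ⟨z, hz⟩
      simp only [Finset.mem_insert, Finset.mem_singleton] at hz
      rcases hz with h | h <;> subst h <;> simp [hab.symm] }
  rw [← Matrix.det_submatrix_equiv_self e
    (fun i j : {x : ι // x ∈ ({a, b} : Finset ι)} => A i.1 j.1)]
  rw [Matrix.det_fin_two]
  simp [Matrix.submatrix, e]

lemma sigma2_eq {ι : Type*} [Fintype ι] [DecidableEq ι] (A : Matrix ι ι ℝ) (a b c : ι)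
    (hab : a ≠ b) (hac : a ≠ c) (hbc : b ≠ c)
    (hrow : ∀ i j, i ∉ ({a, b, c} : Finset ι) → A i j = 0) :
    sigmaK 2 A = (A a a * A b b - A a b * A b a) + (A a a * A c c - A a c * A c a)
      + (A b b * A c c - A b c * A c b) := by
  classical
  have hS3 : ({({a,b} : Finset ι), {a,c}, {b,c}} : Finset (Finset ι))
      ⊆ (Finset.univ : Finset ι).powersetCard 2 := by
    intro s hs
    simp only [Finset.mem_insert, Finset.mem_singleton] at hs
    rcases hs with rfl | rfl | rfl <;>
      simp [Finset.mem_powersetCard, Finset.card_pair, hab, hac, hbc]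
  rw [sigmaK, ← Finset.sum_subset hS3 ?_]
  · have h1 : ({a,b} : Finset ι) ∉ ({({a,c} : Finset ι), {b,c}} : Finset (Finset ι)) := by
      simp only [Finset.mem_insert, Finset.mem_singleton]
      push_neg
      constructor
      · intro h
        have : b ∈ ({a,c} : Finset ι) := h ▸ (by simp : b ∈ ({a,b} : Finset ι))
        simp [hab.symm, hbc] at this
      · intro h
        have : a ∈ ({b,c} : Finset ι) := h ▸ (by simp : a ∈ ({a,b} : Finset ι))
        simp [hab, hac] at this
    have h2 : ({a,c} : Finset ι) ∉ ({({b,c} : Finset ι)} : Finset (Finset ι)) := by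
      simp only [Finset.mem_singleton]
      intro h
      have : a ∈ ({b,c} : Finset ι) := h ▸ (by simp : a ∈ ({a,c} : Finset ι))
      simp [hab, hac] at this
    rw [show ({({a,b} : Finset ι), {a,c}, {b,c}} : Finset (Finset ι))
        = insert {a,b} (insert {a,c} {{b,c}}) from rfl]
    rw [Finset.sum_insert h1, Finset.sum_insert h2, Finset.sum_singleton]
    rw [det_pair A a b hab, det_pair A a c hac, det_pair A b c hbc]; ring
  · intro s hs hns
    have hcard : s.card = 2 := (Finset.mem_powersetCard.mp hs).2
    have hnsub : ¬ s ⊆ ({a, b, c} : Finset ι) := by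
      intro hsub
      apply hns
      obtain ⟨u, v, huv, rfl⟩ := Finset.card_eq_two.mp hcard
      have hu : u ∈ ({a,b,c} : Finset ι) := hsub (by simp)
      have hv : v ∈ ({a,b,c} : Finset ι) := hsub (by simp)
      simp only [Finset.mem_insert, Finset.mem_singleton] at hu hv ⊢
      rcases hu with rfl | rfl | rfl <;> rcases hv with rfl | rfl | rfl <;>
        first
          | exact absurd rfl huv
          | simp [Finset.pair_comm]
    obtain ⟨i, his, hi⟩ := Finset.not_subset.mp hnsub
    exact Matrix.det_eq_zero_of_row_eq_zero ⟨i, his⟩ (fun j => hrow i j.1 hi)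

lemma iter_deriv_polyeval (r : Polynomial ℝ) (k : ℕ) :
    deriv^[k] (fun t => r.eval t) = fun t => (Polynomial.derivative^[k] r).eval t := by
  induction k generalizing r with
  | zero => simp
  | succ k ih =>
    rw [Function.iterate_succ_apply, Function.iterate_succ_apply]
    rw [show deriv (fun t => r.eval t) = fun t => (Polynomial.derivative r).eval t from
      funext fun t => Polynomial.deriv r]
    exact ih _

lemma iter_deriv_sinh (m : ℕ) : deriv^[2*m] Real.sinh = Real.sinh := by
  induction m with
  | zero => simp
  | succ m ih =>
    have : 2 * (m + 1) = (2 * m) + 1 + 1 := by ring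
    rw [this, Function.iterate_succ_apply', Function.iterate_succ_apply', ih,
      Real.deriv_sinh, Real.deriv_cosh]

lemma sinh_not_poly (q : Polynomial ℝ) : ¬ ∀ t : ℝ, Real.sinh t = q.eval t := by
  intro h
  have heq : Real.sinh = fun t => q.eval t := funext h
  have h1 := congrArg (deriv^[2 * (q.natDegree + 1)]) heq
  rw [iter_deriv_sinh, iter_deriv_polyeval,
    Polynomial.iterate_derivative_eq_zero (by omega)] at h1
  have := congrFun h1 1
  simp at this

lemma mv_restrict (n : ℕ) (i2 : Fin n) (p : MvPolynomial (Fin n) ℝ) :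
    ∃ q : Polynomial ℝ, ∀ t : ℝ, q.eval t = MvPolynomial.eval (Pi.single i2 t) p := by
  classical
  refine ⟨MvPolynomial.eval₂ Polynomial.C (fun k => if k = i2 then Polynomial.X else 0) p, ?_⟩
  intro t
  have h := MvPolynomial.eval₂_comp_left (Polynomial.evalRingHom t) Polynomial.C
    (fun k => if k = i2 then Polynomial.X else 0) p
  simp only [Polynomial.coe_evalRingHom] at h
  rw [h]
  have h2 : (Polynomial.evalRingHom t).comp Polynomial.C = RingHom.id ℝ := by
    ext r; simp
  have h3 : (Polynomial.eval t ∘ fun k => if k = i2 then Polynomial.X else 0)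
      = Pi.single i2 t := by
    funext k; by_cases hk : k = i2 <;> simp [hk, Pi.single_apply]
  rw [h2, h3, MvPolynomial.eval₂_id]

lemma contDiff_myU (i0 i1 i2 : Fin n) : ContDiff ℝ (⊤ : ℕ∞) (myU i0 i1 i2) := by
  have hp0 : ContDiff ℝ (⊤ : ℕ∞) (fun y : Fin n → ℝ => y i0) := (pr i0).contDiff
  have hp1 : ContDiff ℝ (⊤ : ℕ∞) (fun y : Fin n → ℝ => y i1) := (pr i1).contDiff
  have hp2 : ContDiff ℝ (⊤ : ℕ∞) (fun y : Fin n → ℝ => y i2) := (pr i2).contDiff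
  have hexp : ContDiff ℝ (⊤ : ℕ∞) (fun y : Fin n → ℝ => Real.exp (y i2)) :=
    Real.contDiff_exp.comp hp2
  have hsinh : ContDiff ℝ (⊤ : ℕ∞) (fun y : Fin n → ℝ => Real.sinh (y i2)) :=
    Real.contDiff_sinh.comp hp2
  exact ((hexp.mul ((hp0.pow 2).add (hp1.pow 2))).div_const 2).sub hsinh

end Aux

/-- For every integer `n ≥ 3`, there exists a smooth, non-polynomial entire solution
of `σ₂(D²u) = 1` on `ℝⁿ`. -/
theorem nonpolynomial_entire_solution_sigma2 (n : ℕ) (hn : 3 ≤ n) :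
    ∃ u : (Fin n → ℝ) → ℝ, ContDiff ℝ (⊤ : ℕ∞) u ∧
      (¬ ∃ p : MvPolynomial (Fin n) ℝ, ∀ x, u x = MvPolynomial.eval x p) ∧
      (∀ x, sigmaK 2 (hessian u x) = 1) := by
  set i0 : Fin n := ⟨0, by omega⟩ with hi0def
  set i1 : Fin n := ⟨1, by omega⟩ with hi1def
  set i2 : Fin n := ⟨2, by omega⟩ with hi2def
  have h01 : i0 ≠ i1 := by simp [hi0def, hi1def, Fin.ext_iff]
  have h02 : i0 ≠ i2 := by simp [hi0def, hi2def, Fin.ext_iff]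
  have h12 : i1 ≠ i2 := by simp [hi1def, hi2def, Fin.ext_iff]
  refine ⟨myU i0 i1 i2, contDiff_myU i0 i1 i2, ?_, ?_⟩
  · rintro ⟨p, hp⟩
    obtain ⟨q, hq⟩ := mv_restrict n i2 p
    apply sinh_not_poly (-q)
    intro t
    have h := hp (Pi.single i2 t)
    simp only [myU] at h
    rw [Pi.single_eq_same, Pi.single_eq_of_ne h02, Pi.single_eq_of_ne h12] at h
    rw [Polynomial.eval_neg, hq t, ← h]
    ring
  · intro x
    have hrow : ∀ i j, i ∉ ({i0, i1, i2} : Finset (Fin n)) →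
        hessian (myU i0 i1 i2) x i j = 0 := by
      intro i j hi
      simp only [Finset.mem_insert, Finset.mem_singleton, not_or] at hi
      obtain ⟨hi0, hi1, hi2⟩ := hi
      rw [hess_entry]
      rw [Pi.single_eq_of_ne (Ne.symm hi0), Pi.single_eq_of_ne (Ne.symm hi1),
        Pi.single_eq_of_ne (Ne.symm hi2)]
      ring
    rw [sigma2_eq (hessian (myU i0 i1 i2) x) i0 i1 i2 h01 h02 h12 hrow]
    have e00 : hessian (myU i0 i1 i2) x i0 i0 = Real.exp (x i2) := by
      rw [hess_entry]; simp [Pi.single_apply, h01, h02, h12, h01.symm, h02.symm, h12.symm]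
    have e11 : hessian (myU i0 i1 i2) x i1 i1 = Real.exp (x i2) := by
      rw [hess_entry]; simp [Pi.single_apply, h01, h02, h12, h01.symm, h02.symm, h12.symm]
    have e01 : hessian (myU i0 i1 i2) x i0 i1 = 0 := by
      rw [hess_entry]; simp [Pi.single_apply, h01, h02, h12, h01.symm, h02.symm, h12.symm]
    have e10 : hessian (myU i0 i1 i2) x i1 i0 = 0 := by
      rw [hess_entry]; simp [Pi.single_apply, h01, h02, h12, h01.symm, h02.symm, h12.symm]
    have e02 : hessian (myU i0 i1 i2) x i0 i2 = Real.exp (x i2) * x i0 := by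
      rw [hess_entry]; simp [Pi.single_apply, h01, h02, h12, h01.symm, h02.symm, h12.symm]
    have e20 : hessian (myU i0 i1 i2) x i2 i0 = Real.exp (x i2) * x i0 := by
      rw [hess_entry]; simp [Pi.single_apply, h01, h02, h12, h01.symm, h02.symm, h12.symm]
    have e12 : hessian (myU i0 i1 i2) x i1 i2 = Real.exp (x i2) * x i1 := by
      rw [hess_entry]; simp [Pi.single_apply, h01, h02, h12, h01.symm, h02.symm, h12.symm]
    have e21 : hessian (myU i0 i1 i2) x i2 i1 = Real.exp (x i2) * x i1 := by
      rw [hess_entry]; simp [Pi.single_apply, h01, h02, h12, h01.symm, h02.symm, h12.symm]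
    have e22 : hessian (myU i0 i1 i2) x i2 i2
        = Real.exp (x i2) * ((x i0)^2 + (x i1)^2) / 2 - Real.sinh (x i2) := by
      rw [hess_entry]; simp [Pi.single_apply, h01, h02, h12, h01.symm, h02.symm, h12.symm]
    rw [e00, e11, e01, e10, e02, e20, e12, e21, e22]
    rw [Real.sinh_eq, Real.exp_neg]
    have hE := Real.exp_ne_zero (x i2)
    field_simp
    ring
end

section
/- The function u : ℝ³ → ℝ defined by u(x, y, t) = (x² + y²)eᵗ + (1/4)e^{−t} − eᵗ satisfies σ₂(D²u(x, y, t)) = 1 for every (x, y, t) ∈ ℝ³. -/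
/-!
The function belongs to the family `u_c(x, y, t) = (x² + y²)eᵗ + c e⁻ᵗ - eᵗ`, whose Hessian is
`[[2eᵗ, 0, 2xeᵗ], [0, 2eᵗ, 2yeᵗ], [2xeᵗ, 2yeᵗ, u_c]]` since `∂ₜ² u_c = u_c`. In `σ₂` the terms
`±4(x² + y²)e²ᵗ` and `±4e²ᵗ` cancel, leaving `4c eᵗe⁻ᵗ = 4c`; the theorem is the case `c = 1/4`.
-/

open Real ContinuousLinearMap

lemma det_submatrix_pair {ι : Type*} [DecidableEq ι] (A : Matrix ι ι ℝ) {a b : ι} (hab : a ≠ b) :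
    Matrix.det (fun i j : {x : ι // x ∈ ({a, b} : Finset ι)} => A i.1 j.1)
      = A a a * A b b - A a b * A b a := by
  let e : Fin 2 → {x : ι // x ∈ ({a, b} : Finset ι)} := ![⟨a, by simp⟩, ⟨b, by simp⟩]
  have he : Function.Bijective e := by
    rw [Fintype.bijective_iff_injective_and_card]
    refine ⟨fun i j hij => ?_, by simp [Finset.card_pair hab]⟩
    fin_cases i <;> fin_cases j <;> simp_all [e, eq_comm]
  change Matrix.det (Matrix.of fun i j : {x // x ∈ ({a, b} : Finset ι)} => A i.1 j.1) = _
  rw [← Matrix.det_submatrix_equiv_self (Equiv.ofBijective e he), Matrix.det_fin_two]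
  simp [e]

lemma sigmaK_two_fin_three (A : Matrix (Fin 3) (Fin 3) ℝ) :
    sigmaK 2 A = (A 0 0 * A 1 1 - A 0 1 * A 1 0) + (A 0 0 * A 2 2 - A 0 2 * A 2 0)
      + (A 1 1 * A 2 2 - A 1 2 * A 2 1) := by
  have hpairs : (Finset.univ : Finset (Fin 3)).powersetCard 2 = {{0, 1}, {0, 2}, {1, 2}} := by
    decide
  rw [sigmaK, hpairs, Finset.sum_insert (by decide), Finset.sum_insert (by decide),
    Finset.sum_singleton, det_submatrix_pair A (by decide), det_submatrix_pair A (by decide),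
    det_submatrix_pair A (by decide), add_assoc]

section PartialDerivs

variable {ι : Type*} [Fintype ι] [DecidableEq ι]

abbrev HasPartialDerivs (u : (ι → ℝ) → ℝ) (D : ι → (ι → ℝ) → ℝ) : Prop :=
  ∀ y, HasFDerivAt u (∑ i, D i y • (proj i : (ι → ℝ) →L[ℝ] ℝ)) y

lemma HasPartialDerivs.fderiv_single {u : (ι → ℝ) → ℝ} {D : ι → (ι → ℝ) → ℝ}
    (hu : HasPartialDerivs u D) (y : ι → ℝ) (j : ι) :
    fderiv ℝ u y (Pi.single j 1) = D j y := by
  simp [(hu y).fderiv, Pi.single_apply]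

lemma HasPartialDerivs.hessian_apply {u : (ι → ℝ) → ℝ} {D : ι → (ι → ℝ) → ℝ}
    {D2 : ι → (ι → ℝ) → ℝ} {j : ι} (hu : HasPartialDerivs u D) (hD : HasPartialDerivs (D j) D2)
    (x : ι → ℝ) (i : ι) :
    hessian u x i j = D2 i x := by
  have hcol : (fun y => fderiv ℝ u y (Pi.single j 1)) = D j := funext (hu.fderiv_single · j)
  rw [hessian, hcol, hD.fderiv_single]

lemma hasPartialDerivs_two_mul_mul_exp (j k : ι) :
    HasPartialDerivs (fun w => 2 * w j * exp (w k))
      (Pi.single j (fun w => 2 * exp (w k)) + Pi.single k (fun w => 2 * w j * exp (w k))) := by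
  intro y
  refine (((hasFDerivAt_apply j y).const_mul 2).mul (hasFDerivAt_apply k y).exp).congr_fderiv ?_
  ext w
  simp only [add_apply, smul_apply, proj_apply, smul_eq_mul, Pi.add_apply, Pi.single_apply,
    ite_apply, Pi.zero_apply, sum_apply, add_mul, ite_mul, zero_mul, Finset.sum_add_distrib,
    Finset.sum_ite_eq', Finset.mem_univ, if_true]
  ring

end PartialDerivs

noncomputable def expParaboloid (c : ℝ) (w : Fin 3 → ℝ) : ℝ :=
  (w 0 ^ 2 + w 1 ^ 2) * exp (w 2) + c * exp (-(w 2)) - exp (w 2)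

lemma hasPartialDerivs_expParaboloid (c : ℝ) :
    HasPartialDerivs (expParaboloid c)
      ![fun w => 2 * w 0 * exp (w 2), fun w => 2 * w 1 * exp (w 2), expParaboloid (-c)] := by
  intro y
  have hx := hasFDerivAt_apply (𝕜 := ℝ) (0 : Fin 3) y
  have hy := hasFDerivAt_apply (𝕜 := ℝ) (1 : Fin 3) y
  have ht := hasFDerivAt_apply (𝕜 := ℝ) (2 : Fin 3) y
  refine ((((hx.pow 2).add (hy.pow 2)).mul ht.exp).add (ht.neg.exp.const_mul c)
    |>.sub ht.exp).congr_fderiv ?_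
  ext w
  simp only [Fin.sum_univ_three, Matrix.cons_val_zero, Matrix.cons_val_one, Matrix.cons_val,
    expParaboloid, sub_apply, add_apply, smul_apply, neg_apply, proj_apply, smul_eq_mul,
    nsmul_eq_mul, Pi.add_apply, Pi.neg_apply]
  ring

lemma hessian_expParaboloid (c : ℝ) (v : Fin 3 → ℝ) :
    hessian (expParaboloid c) v =
      !![2 * exp (v 2), 0, 2 * v 0 * exp (v 2);
        0, 2 * exp (v 2), 2 * v 1 * exp (v 2);
        2 * v 0 * exp (v 2), 2 * v 1 * exp (v 2), expParaboloid c v] := by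
  have hu := hasPartialDerivs_expParaboloid c
  have hx := hu.hessian_apply (j := 0) (hasPartialDerivs_two_mul_mul_exp 0 2) v
  have hy := hu.hessian_apply (j := 1) (hasPartialDerivs_two_mul_mul_exp 1 2) v
  have ht := hu.hessian_apply (j := 2) (neg_neg c ▸ hasPartialDerivs_expParaboloid (-c)) v
  ext i j
  fin_cases i <;> fin_cases j <;> simp [hx, hy, ht]

lemma sigmaK_two_hessian_expParaboloid (c : ℝ) (v : Fin 3 → ℝ) :
    sigmaK 2 (hessian (expParaboloid c) v) = 4 * c := by
  have hexp : exp (v 2) * exp (-(v 2)) = 1 := by rw [← exp_add, add_neg_cancel, exp_zero]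
  rw [hessian_expParaboloid, sigmaK_two_fin_three]
  simp only [expParaboloid, Matrix.of_apply, Matrix.cons_val', Matrix.cons_val_zero,
    Matrix.cons_val_one, Matrix.cons_val_fin_one, Matrix.cons_val]
  linear_combination 4 * c * hexp

/-- The function `u(x, y, t) = (x² + y²)eᵗ + (1/4)e^{−t} − eᵗ` satisfies
`σ₂(D²u) = 1` on all of `ℝ³`. -/
theorem explicit_solution_sigma2 (u : (Fin 3 → ℝ) → ℝ)
    (hu : u = fun v => (v 0 ^ 2 + v 1 ^ 2) * Real.exp (v 2)
      + (1 / 4) * Real.exp (-(v 2)) - Real.exp (v 2)) :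
    ∀ v, sigmaK 2 (hessian u v) = 1 := by
  intro v
  subst hu
  exact (sigmaK_two_hessian_expParaboloid (1 / 4) v).trans (by norm_num)
end

section
/- Let n ≥ 3 be odd and set k = (n+1)/2. Define the constants A = 2^{k−1}(C(n−2, k−2) + C(n−2, k−1)) and B = 2^k · C(n−1, k), where C(·,·) denotes the binomial coefficient. Then the smooth function u : ℝ^{n−1} × ℝ → ℝ defined by u(x, t) = |x|² eᵗ + (1/(A(k−1)²)) e^{−(k−1)t} − (B/A) eᵗ satisfies σ_k(D²u(x, t)) = 1 for every (x, t) ∈ ℝ^{n−1} × ℝ. -/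
open Polynomial Matrix

section Arrowhead

variable {R : Type*} [CommRing R] {α : Type*} [DecidableEq α]

def arrowhead (a d : R) (b : α → R) : Matrix (α ⊕ Unit) (α ⊕ Unit) R :=
  fromBlocks (diagonal fun _ => a) (of fun i _ => b i) (of fun _ j => b j) (of fun _ _ => d)

/- Stated without dividing by `a`: it is used in `R[X]` with `a = 1 + C a' * X`, not a unit there. -/
theorem det_arrowhead_mul [Fintype α] (a d : R) (b : α → R) :
    det (arrowhead a d b) * a = a ^ Fintype.card α * (a * d - ∑ i, b i ^ 2) := by
  set L : Matrix (α ⊕ Unit) (α ⊕ Unit) R := fromBlocks 1 0 (of fun _ j => -b j) (of fun _ _ => a)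
  have hLM : L * arrowhead a d b = fromBlocks (diagonal fun _ => a) (of fun i _ => b i) 0
      (of fun _ _ => a * d - ∑ i, b i ^ 2) := by
    simp only [L, arrowhead, fromBlocks_multiply]
    congr 1 <;> ext <;> simp [Matrix.mul_apply, diagonal_apply, sq, sub_eq_neg_add, mul_comm]
  calc det (arrowhead a d b) * a = det L * det (arrowhead a d b) := by
        simp [L, det_fromBlocks_zero₁₂, mul_comm]
    _ = _ := by rw [← det_mul, hLM, det_fromBlocks_zero₂₁]; simp

theorem one_add_X_smul_map_arrowhead (a d : R) (b : α → R) :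
    1 + (X : R[X]) • (arrowhead a d b).map C =
      arrowhead (1 + C a * X) (1 + C d * X) (fun i => C (b i) * X) := by
  rw [arrowhead, arrowhead, fromBlocks_map, fromBlocks_smul, ← fromBlocks_one, fromBlocks_add]
  congr 1 <;> ext i j : 1
  · by_cases h : i = j <;> simp [one_apply, h]
  all_goals simp

theorem det_one_add_X_smul_map_arrowhead [IsDomain R] [Fintype α] [Nonempty α]
    (a d : R) (b : α → R) :
    det (1 + (X : R[X]) • (arrowhead a d b).map C) =
      (1 + C a * X) ^ Fintype.card α * (1 + C d * X)
        - (1 + C a * X) ^ (Fintype.card α - 1) * C (∑ i, b i ^ 2) * X ^ 2 := by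
  have hc : (1 + C a * X) ≠ 0 := fun h => by simpa using congrArg (coeff · 0) h
  obtain ⟨m, hm⟩ : ∃ m, Fintype.card α = m + 1 :=
    Nat.exists_eq_succ_of_ne_zero Fintype.card_ne_zero
  apply mul_right_cancel₀ hc
  rw [one_add_X_smul_map_arrowhead, det_arrowhead_mul, hm, Nat.add_sub_cancel]
  simp only [mul_pow, ← Finset.sum_mul, map_sum, C_pow]
  ring

theorem coeff_one_add_C_mul_X_pow (a : R) (m i : ℕ) :
    ((1 + C a * X) ^ m).coeff i = m.choose i * a ^ i := by
  rw [show (1 + C a * X) ^ m = ((1 + X) ^ m).comp (C a * X) by simp [add_comp],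
    comp_C_mul_X_coeff, coeff_one_add_X_pow]

end Arrowhead

theorem sigmaK_eq_coeff_det {ι : Type*} [Fintype ι] [DecidableEq ι] (M : Matrix ι ι ℝ) (k : ℕ) :
    sigmaK k M = (det (1 + (X : ℝ[X]) • M.map C)).coeff k :=
  (coeff_det_one_add_X_smul_eq_sum_minors M k).symm

theorem sigmaK_arrowhead {α : Type*} [Fintype α] [DecidableEq α] [Nonempty α]
    (a d : ℝ) (b : α → ℝ) (k : ℕ) :
    sigmaK (k + 2) (arrowhead a d b) =
      (Fintype.card α).choose (k + 2) * a ^ (k + 2)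
        + (Fintype.card α).choose (k + 1) * a ^ (k + 1) * d
        - (Fintype.card α - 1).choose k * a ^ k * ∑ i, b i ^ 2 := by
  rw [sigmaK_eq_coeff_det, det_one_add_X_smul_map_arrowhead, mul_add, mul_one, ← mul_assoc,
    coeff_sub, coeff_add, coeff_mul_X, coeff_mul_X_pow, coeff_mul_C, coeff_mul_C]
  simp only [coeff_one_add_C_mul_X_pow]

section Hessian

variable {α : Type*} [Fintype α]

theorem fderiv_sum_sq_mul_add {f f' g g' : ℝ → ℝ} (hf : ∀ t, HasDerivAt f (f' t) t)
    (hg : ∀ t, HasDerivAt g (g' t) t) (y w : α ⊕ Unit → ℝ) :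
    fderiv ℝ (fun v => (∑ i, v (Sum.inl i) ^ 2) * f (v (Sum.inr ())) + g (v (Sum.inr ()))) y w =
      (∑ i, 2 * y (Sum.inl i) * w (Sum.inl i)) * f (y (Sum.inr ()))
        + ((∑ i, y (Sum.inl i) ^ 2) * f' (y (Sum.inr ())) + g' (y (Sum.inr ()))) * w (Sum.inr ()) := by
  have ht := hasFDerivAt_apply (𝕜 := ℝ) (Sum.inr () : α ⊕ Unit) y
  have hsq := HasFDerivAt.fun_sum (u := Finset.univ) fun i _ =>
    (hasFDerivAt_apply (𝕜 := ℝ) (Sum.inl i : α ⊕ Unit) y).pow 2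
  have H : HasFDerivAt
      (fun v : α ⊕ Unit → ℝ => (∑ i, v (Sum.inl i) ^ 2) * f (v (Sum.inr ())) + g (v (Sum.inr ())))
      _ y := (hsq.fun_mul ((hf _).comp_hasFDerivAt y ht)).fun_add ((hg _).comp_hasFDerivAt y ht)
  rw [H.fderiv]
  simp only [Function.comp_apply, Nat.add_one_sub_one, pow_one, nsmul_eq_mul, Nat.cast_ofNat,
    _root_.add_apply, _root_.smul_apply, ContinuousLinearMap.proj_apply, smul_eq_mul,
    _root_.sum_apply]
  ring

theorem fderiv_apply_mul {h h' : ℝ → ℝ} (hh : ∀ t, HasDerivAt h (h' t) t) (j : α)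
    (y w : α ⊕ Unit → ℝ) :
    fderiv ℝ (fun v => v (Sum.inl j) * h (v (Sum.inr ()))) y w =
      w (Sum.inl j) * h (y (Sum.inr ())) + y (Sum.inl j) * h' (y (Sum.inr ())) * w (Sum.inr ()) := by
  have H : HasFDerivAt (fun v : α ⊕ Unit → ℝ => v (Sum.inl j) * h (v (Sum.inr ()))) _ y :=
    (hasFDerivAt_apply (Sum.inl j) y).fun_mul
      ((hh _).comp_hasFDerivAt y (hasFDerivAt_apply (𝕜 := ℝ) (Sum.inr ()) y))
  rw [H.fderiv]
  simp only [_root_.add_apply, _root_.smul_apply, ContinuousLinearMap.proj_apply, smul_eq_mul]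
  ring

theorem hessian_sum_sq_mul_add [DecidableEq α] {f f' f'' g g' g'' : ℝ → ℝ}
    (hf : ∀ t, HasDerivAt f (f' t) t) (hf' : ∀ t, HasDerivAt f' (f'' t) t)
    (hg : ∀ t, HasDerivAt g (g' t) t) (hg' : ∀ t, HasDerivAt g' (g'' t) t) (x : α ⊕ Unit → ℝ) :
    hessian (fun v => (∑ i, v (Sum.inl i) ^ 2) * f (v (Sum.inr ())) + g (v (Sum.inr ()))) x =
      arrowhead (2 * f (x (Sum.inr ())))
        ((∑ i, x (Sum.inl i) ^ 2) * f'' (x (Sum.inr ())) + g'' (x (Sum.inr ())))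
        (fun i => 2 * x (Sum.inl i) * f' (x (Sum.inr ()))) := by
  set U : (α ⊕ Unit → ℝ) → ℝ :=
    fun v => (∑ i, v (Sum.inl i) ^ 2) * f (v (Sum.inr ())) + g (v (Sum.inr ()))
  have partial_inl (j : α) : (fun y => fderiv ℝ U y (Pi.single (Sum.inl j) 1)) =
      fun y => y (Sum.inl j) * (2 * f (y (Sum.inr ()))) := by
    funext y
    rw [fderiv_sum_sq_mul_add hf hg]
    simp only [Pi.single_apply, Sum.inl.injEq, mul_ite, mul_one, mul_zero, Finset.sum_ite_eq',
      Finset.mem_univ, ↓reduceIte, reduceCtorEq, add_zero]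
    ring
  have partial_inr : (fun y => fderiv ℝ U y (Pi.single (Sum.inr ()) 1)) =
      fun y => (∑ i, y (Sum.inl i) ^ 2) * f' (y (Sum.inr ())) + g' (y (Sum.inr ())) := by
    funext y
    rw [fderiv_sum_sq_mul_add hf hg]
    simp
  ext p (j | ⟨⟩)
  · rw [hessian, partial_inl, fderiv_apply_mul fun t => (hf t).const_mul 2]
    rcases p with i | ⟨⟩
    · simp [arrowhead, Pi.single_apply, diagonal_apply, eq_comm]
    · simp only [ne_eq, reduceCtorEq, not_false_eq_true, Pi.single_eq_of_ne, zero_mul,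
        Pi.single_eq_same, mul_one, zero_add, arrowhead, fromBlocks_apply₂₁, of_apply]
      ring
  · rw [hessian, partial_inr, fderiv_sum_sq_mul_add hf' hg']
    cases p <;> simp [arrowhead, Pi.single_apply]

theorem hessian_sum_sq_mul_exp [DecidableEq α] (c₁ c₂ μ : ℝ) (x : α ⊕ Unit → ℝ) :
    hessian (fun v => (∑ i, v (Sum.inl i) ^ 2) * Real.exp (v (Sum.inr ()))
      + c₁ * Real.exp (μ * v (Sum.inr ())) - c₂ * Real.exp (v (Sum.inr ()))) x =
      arrowhead (2 * Real.exp (x (Sum.inr ())))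
        ((∑ i, x (Sum.inl i) ^ 2) * Real.exp (x (Sum.inr ()))
          + c₁ * μ ^ 2 * Real.exp (μ * x (Sum.inr ())) - c₂ * Real.exp (x (Sum.inr ())))
        (fun i => 2 * x (Sum.inl i) * Real.exp (x (Sum.inr ()))) := by
  have hg (c t : ℝ) : HasDerivAt (fun t => c * Real.exp (μ * t) - c₂ * Real.exp t)
      (c * μ * Real.exp (μ * t) - c₂ * Real.exp t) t :=
    ((((hasDerivAt_id' t).const_mul μ).exp.const_mul c).fun_sub
      ((Real.hasDerivAt_exp t).const_mul c₂)).congr_deriv (by ring)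
  convert hessian_sum_sq_mul_add Real.hasDerivAt_exp Real.hasDerivAt_exp (hg c₁) (hg (c₁ * μ)) x
    using 2
  · funext v; ring
  · ring

end Hessian

theorem choose_two_mul_add_two_succ (p : ℕ) :
    (2 * p + 2).choose (p + 1) = 2 * (2 * p + 1).choose p := by
  rw [Nat.choose_succ_succ', Nat.choose_symm_half]
  ring

/-- For odd `n ≥ 3` and `k = (n+1)/2`, the explicit function
`u(x,t) = |x|² eᵗ + (1/(A(k−1)²)) e^{−(k−1)t} − (B/A) eᵗ` on `ℝ^{n-1} × ℝ`
solves `σ_k(D²u) = 1`. -/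
theorem explicit_solution_sigmaK (n k : ℕ) (hn : 3 ≤ n) (hodd : Odd n)
    (hk : k = (n + 1) / 2) (A B : ℝ)
    (hA : A = 2 ^ (k - 1) * (((n - 2).choose (k - 2) : ℝ) + ((n - 2).choose (k - 1) : ℝ)))
    (hB : B = 2 ^ k * ((n - 1).choose k : ℝ))
    (u : (Fin (n - 1) ⊕ Unit → ℝ) → ℝ)
    (hu : u = fun v => (∑ i : Fin (n - 1), v (Sum.inl i) ^ 2) * Real.exp (v (Sum.inr ()))
      + (1 / (A * ((k : ℝ) - 1) ^ 2)) * Real.exp (-((k : ℝ) - 1) * v (Sum.inr ()))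
      - (B / A) * Real.exp (v (Sum.inr ()))) :
    ∀ v, sigmaK k (hessian u v) = 1 := by
  obtain ⟨p, rfl, rfl⟩ : ∃ p, n = 2 * p + 3 ∧ k = p + 2 := by
    obtain ⟨m, rfl⟩ := hodd
    exact ⟨m - 1, by omega, by omega⟩
  intro v
  have : Nonempty (Fin (2 * p + 3 - 1)) := ⟨⟨0, by omega⟩⟩
  rw [hu, hessian_sum_sq_mul_exp, sigmaK_arrowhead, Fintype.card_fin]
  simp only [show 2 * p + 3 - 1 = 2 * p + 2 by omega, show 2 * p + 3 - 2 = 2 * p + 1 by omega,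
    Nat.add_sub_cancel, show p + 2 - 1 = p + 1 by omega] at hA hB ⊢
  rw [← Nat.cast_add, ← Nat.choose_succ_succ', choose_two_mul_add_two_succ] at hA
  rw [choose_two_mul_add_two_succ, show ((p + 2 : ℕ) : ℝ) - 1 = p + 1 by push_cast; ring, neg_mul]
  have hEG : Real.exp (v (Sum.inr ())) ^ (p + 1) * Real.exp (-((p + 1) * v (Sum.inr ()))) = 1 := by
    rw [← Real.exp_nat_mul, ← Real.exp_add, Real.exp_eq_one_iff]
    push_cast
    ring
  have hN : ((2 * p + 1).choose p : ℝ) ≠ 0 := Nat.cast_ne_zero.2 (Nat.choose_pos (by omega)).ne'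
  simp only [mul_pow, ← Finset.sum_mul, ← Finset.mul_sum]
  rw [hA, hB]
  push_cast
  field_simp
  linear_combination hEG
end

section
/- Let A be a symmetric n×n real matrix such that σ_k(A) > 0 and such that at most one eigenvalue of A (counted with multiplicity) is negative. Then A lies in Γ_k⁺, i.e., A belongs to the connected component of the set {M : M symmetric n×n real matrix with σ_k(M) > 0} (as a subset of the space of symmetric n×n real matrices) that contains the identity matrix. -/
open Finset Matrix Polynomial

theorem JoinedIn.mem_connectedComponentIn {X : Type*} [TopologicalSpace X] {F : Set X}
    {x y : X} (h : JoinedIn F x y) : y ∈ connectedComponentIn F x :=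
  (isPathConnected_pathComponentIn h.source_mem).isConnected.isPreconnected
    |>.subset_connectedComponentIn (mem_pathComponentIn_self h.source_mem)
      pathComponentIn_subset h

section

variable {ι : Type*} [Fintype ι] [DecidableEq ι] {k : ℕ}

theorem sigmaK_eq_coeff_det_one_add_X_smul (M : Matrix ι ι ℝ) :
    sigmaK k M = (det (1 + (X : ℝ[X]) • M.map C)).coeff k :=
  (coeff_det_one_add_X_smul_eq_sum_minors M k).symm

theorem sigmaK_mul_comm (A B : Matrix ι ι ℝ) :
    sigmaK k (A * B) = sigmaK k (B * A) := by
  rw [sigmaK_eq_coeff_det_one_add_X_smul, sigmaK_eq_coeff_det_one_add_X_smul, Matrix.map_mul,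
    Matrix.map_mul, ← smul_mul_assoc, ← mul_smul_comm, det_one_add_mul_comm]

theorem sigmaK_mul_mul_of_mul_eq_one {U V : Matrix ι ι ℝ} (h : V * U = 1)
    (M : Matrix ι ι ℝ) : sigmaK k (U * M * V) = sigmaK k M := by
  rw [sigmaK_mul_comm, ← Matrix.mul_assoc, h, Matrix.one_mul]

theorem sigmaK_diagonal (d : ι → ℝ) :
    sigmaK k (diagonal d) = ∑ s ∈ univ.powersetCard k, ∏ i ∈ s, d i := by
  refine sum_congr rfl fun s _ => ?_
  change det ((diagonal d).submatrix Subtype.val Subtype.val) = _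
  rw [submatrix_diagonal _ _ Subtype.val_injective, det_diagonal]
  exact prod_coe_sort s d

theorem le_card_of_sigmaK_pos {M : Matrix ι ι ℝ} (h : 0 < sigmaK k M) :
    k ≤ Fintype.card ι := by
  by_contra hk
  rw [sigmaK, powersetCard_eq_empty.2 (by simpa using hk), sum_empty] at h
  exact h.false

theorem sigmaK_diagonal_pos (hk : k ≤ Fintype.card ι) {d : ι → ℝ} (hd : ∀ i, 0 < d i) :
    0 < sigmaK k (diagonal d) := by
  rw [sigmaK_diagonal]
  exact sum_pos (fun s _ => prod_pos fun i _ => hd i) (powersetCard_nonempty.2 (by simpa))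

theorem monotone_sigmaK_diagonal_update {d : ι → ℝ} {j : ι} (hd : ∀ i ≠ j, 0 ≤ d i) :
    Monotone fun x => sigmaK k (diagonal (Function.update d j x)) := by
  intro x y hxy
  simp only [sigmaK_diagonal]
  refine sum_le_sum fun s _ => ?_
  by_cases hj : j ∈ s
  · rw [prod_update_of_mem hj, prod_update_of_mem hj]
    refine mul_le_mul_of_nonneg_right hxy (prod_nonneg fun i hi => hd i ?_)
    simpa using (mem_sdiff.1 hi).2
  · rw [prod_update_of_notMem hj, prod_update_of_notMem hj]

theorem joinedIn_one_of_nonneg {d : ι → ℝ} (hd : 0 ≤ d) (hpos : 0 < sigmaK k (diagonal d)) :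
    JoinedIn {d : ι → ℝ | 0 < sigmaK k (diagonal d)} d 1 := by
  refine JoinedIn.of_segment_subset ?_
  rintro _ ⟨a, b, ha, hb, hab, rfl⟩
  rcases hb.eq_or_lt with rfl | hb
  · simpa [show a = 1 by linarith] using hpos
  · refine sigmaK_diagonal_pos (le_card_of_sigmaK_pos hpos) fun i => ?_
    have := mul_nonneg ha (hd i)
    simp only [Pi.add_apply, Pi.smul_apply, Pi.one_apply, smul_eq_mul, mul_one]
    linarith

theorem joinedIn_one_of_forall_ne_nonneg {d : ι → ℝ} {j : ι} (hd : ∀ i ≠ j, 0 ≤ d i)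
    (hpos : 0 < sigmaK k (diagonal d)) :
    JoinedIn {d : ι → ℝ | 0 < sigmaK k (diagonal d)} d 1 := by
  have hmono := monotone_sigmaK_diagonal_update (k := k) hd
  have hle : ∀ x, d j ≤ x → sigmaK k (diagonal d) ≤ sigmaK k (diagonal (Function.update d j x)) :=
    fun x hx => by simpa using hmono hx
  set d' := Function.update d j (max (d j) 0)
  have hraise : JoinedIn {d : ι → ℝ | 0 < sigmaK k (diagonal d)} d d' := by
    refine JoinedIn.of_segment_subset ?_
    rw [show segment ℝ d d' = Function.update d j '' Set.Icc (d j) (max (d j) 0) by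
      rw [← segment_eq_Icc (le_max_left _ _), Pi.image_update_segment, Function.update_eq_self]]
    rintro _ ⟨x, hx, rfl⟩
    exact hpos.trans_le (hle x hx.1)
  refine hraise.trans (joinedIn_one_of_nonneg (fun i => ?_) (hpos.trans_le (hle _ ?_)))
  · by_cases hi : i = j
    · subst hi; simp [d']
    · simp [d', Function.update_of_ne hi, hd i hi]
  · exact le_max_left _ _

theorem joinedIn_one_of_card_neg_le_one {d : ι → ℝ} (hd : #{i | d i < 0} ≤ 1)
    (hpos : 0 < sigmaK k (diagonal d)) :
    JoinedIn {d : ι → ℝ | 0 < sigmaK k (diagonal d)} d 1 := by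
  rcases isEmpty_or_nonempty ι with _ | _
  · exact Subsingleton.elim d 1 ▸ JoinedIn.refl hpos
  · obtain ⟨j, hj⟩ := card_le_one_iff_subset_singleton.1 hd
    refine joinedIn_one_of_forall_ne_nonneg (j := j) (fun i hi => ?_) hpos
    by_contra h
    exact hi (mem_singleton.1 (hj (by simpa using h)))

end

/-- A symmetric matrix with `σ_k > 0` and at most one negative eigenvalue lies in
`Γ_k⁺`, the connected component of `{M symmetric : σ_k(M) > 0}` containing the
identity. -/
theorem mem_gammaK_of_at_most_one_negative_eigenvalue (n k : ℕ)
    (A : Matrix (Fin n) (Fin n) ℝ) (hA : A.IsHermitian)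
    (hpos : 0 < sigmaK k A)
    (hneg : (Finset.univ.filter fun i => hA.eigenvalues i < 0).card ≤ 1) :
    A ∈ connectedComponentIn
      {M : Matrix (Fin n) (Fin n) ℝ | M.IsSymm ∧ 0 < sigmaK k M} 1 := by
  let U : Matrix (Fin n) (Fin n) ℝ := hA.eigenvectorUnitary.1
  have hUU : star U * U = 1 := Unitary.coe_star_mul_self _
  have hUU' : U * star U = 1 := Unitary.coe_mul_star_self _
  let f : (Fin n → ℝ) → Matrix (Fin n) (Fin n) ℝ := fun d => U * diagonal d * star U
  have hfA : f hA.eigenvalues = A := by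
    conv_rhs => rw [hA.spectral_theorem]
    simp [f, U, RCLike.ofReal_real_eq_id]
  have hf1 : f 1 = 1 := by
    change U * diagonal (fun _ => 1) * star U = 1
    rw [diagonal_one, Matrix.mul_one, hUU']
  have hfG : f '' {d | 0 < sigmaK k (diagonal d)} ⊆
      {M : Matrix (Fin n) (Fin n) ℝ | M.IsSymm ∧ 0 < sigmaK k M} := by
    rintro _ ⟨d, hd, rfl⟩
    refine ⟨isHermitian_iff_isSymm.1 ?_, by rwa [sigmaK_mul_mul_of_mul_eq_one hUU]⟩
    simp only [f, star_eq_conjTranspose]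
    exact isHermitian_mul_mul_conjTranspose U (isHermitian_diagonal d)
  rw [← hfA, ← hf1]
  rw [← hfA, sigmaK_mul_mul_of_mul_eq_one hUU] at hpos
  exact (((joinedIn_one_of_card_neg_le_one hneg hpos).map (by fun_prop)).mono hfG).symm
    |>.mem_connectedComponentIn
end

section
/- Let n ≥ 3, and let r, t, c be real numbers. Let M be the symmetric n×n real matrix with M₁₁ = 2eᵗ, Mᵢᵢ = 2eᵗ for 2 ≤ i ≤ n−1, M₁ₙ = Mₙ₁ = 2reᵗ, Mₙₙ = r²eᵗ + c, and all other entries zero. Then at most one eigenvalue of M (counted with multiplicity) is negative; equivalently, M has at least n−1 nonnegative eigenvalues counted with multiplicity. -/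
namespace Matrix

variable {ι : Type*} [Fintype ι]

theorem dotProduct_mulVec_nonneg_of_apply_eq_zero {A : Matrix ι ι ℝ} {p : ι}
    (hdiag : ∀ k, k ≠ p → 0 ≤ A k k) (hoff : ∀ k l, k ≠ l → k ≠ p → l ≠ p → A k l = 0)
    {x : ι → ℝ} (hx : x p = 0) : 0 ≤ x ⬝ᵥ A *ᵥ x := by
  simp only [dotProduct, mulVec, Finset.mul_sum]
  refine Finset.sum_nonneg fun k _ => Finset.sum_nonneg fun l _ => ?_
  by_cases hkp : k = p
  · simp [hkp, hx]
  by_cases hlp : l = p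
  · simp [hlp, hx]
  by_cases hkl : k = l
  · subst hkl
    nlinarith [hdiag k hkp, mul_self_nonneg (x k)]
  · simp [hoff k l hkl hkp hlp]

namespace IsHermitian

variable [DecidableEq ι] {A : Matrix ι ι ℝ} (hA : A.IsHermitian)

theorem eigenvectorBasis_dotProduct (i j : ι) :
    ⇑(hA.eigenvectorBasis i) ⬝ᵥ ⇑(hA.eigenvectorBasis j) = if i = j then 1 else 0 := by
  simpa [EuclideanSpace.inner_eq_star_dotProduct, dotProduct_comm, eq_comm] using
    orthonormal_iff_ite.mp hA.eigenvectorBasis.orthonormal j i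

theorem dotProduct_mulVec_eigenvectorBasis_add {i j : ι} (hij : i ≠ j) (a b : ℝ) :
    let v := a • ⇑(hA.eigenvectorBasis i) + b • ⇑(hA.eigenvectorBasis j)
    v ⬝ᵥ A *ᵥ v = a ^ 2 * hA.eigenvalues i + b ^ 2 * hA.eigenvalues j := by
  simp only [mulVec_add, mulVec_smul, mulVec_eigenvectorBasis, add_dotProduct, dotProduct_add,
    smul_dotProduct, dotProduct_smul, eigenvectorBasis_dotProduct, if_neg hij, if_neg hij.symm,
    ↓reduceIte, smul_eq_mul]
  ring

theorem card_eigenvalues_neg_le_one_of_nonneg_on_ker {φ : (ι → ℝ) →ₗ[ℝ] ℝ}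
    (hφ : ∀ x, φ x = 0 → 0 ≤ x ⬝ᵥ A *ᵥ x) :
    (Finset.univ.filter fun i => hA.eigenvalues i < 0).card ≤ 1 := by
  refine Finset.card_le_one.mpr fun i hi j hj => by_contra fun hij => ?_
  simp only [Finset.mem_filter, Finset.mem_univ, true_and] at hi hj
  set u := φ (hA.eigenvectorBasis i)
  set w := φ (hA.eigenvectorBasis j)
  obtain ⟨a, b, hab, hker⟩ : ∃ a b : ℝ, 0 < a ^ 2 + b ^ 2 ∧ a * u + b * w = 0 := by
    by_cases hu : u = 0
    · exact ⟨1, 0, by norm_num, by simp [hu]⟩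
    · exact ⟨w, -u, by rw [neg_sq]; positivity, by ring⟩
  have hnonneg := hφ (a • ⇑(hA.eigenvectorBasis i) + b • ⇑(hA.eigenvectorBasis j))
    (by simpa only [map_add, map_smul, smul_eq_mul] using hker)
  rw [hA.dotProduct_mulVec_eigenvectorBasis_add hij] at hnonneg
  nlinarith [mul_nonneg (sq_nonneg a) (neg_pos.2 hi).le, mul_nonneg (sq_nonneg b) (neg_pos.2 hj).le,
    mul_pos hab (mul_pos (neg_pos.2 hi) (neg_pos.2 hj))]

end IsHermitian

end Matrix

/-- The matrix arising as the Hessian of `u(x,t) = r² eᵗ + h(t)` has at most one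
negative eigenvalue (counted with multiplicity). -/
theorem at_most_one_negative_eigenvalue (n : ℕ) (hn : 3 ≤ n) (r t c : ℝ)
    (M : Matrix (Fin n) (Fin n) ℝ)
    (hM : M = Matrix.of fun i j : Fin n =>
      if i = j then (if (i : ℕ) = n - 1 then r ^ 2 * Real.exp t + c else 2 * Real.exp t)
      else if ((i : ℕ) = 0 ∧ (j : ℕ) = n - 1) ∨ ((i : ℕ) = n - 1 ∧ (j : ℕ) = 0)
        then 2 * r * Real.exp t else 0)
    (hHerm : M.IsHermitian) :
    (Finset.univ.filter fun i => hHerm.eigenvalues i < 0).card ≤ 1 := by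
  let p : Fin n := ⟨n - 1, by omega⟩
  have hdiag : ∀ k, k ≠ p → 0 ≤ M k k := fun k hk => by
    simp [hM, p, Fin.ext_iff.not.mp hk, (Real.exp_pos t).le]
  have hoff : ∀ k l, k ≠ l → k ≠ p → l ≠ p → M k l = 0 := fun k l hkl hk hl => by
    simp [hM, hkl, p, Fin.ext_iff.not.mp hk, Fin.ext_iff.not.mp hl]
  exact hHerm.card_eigenvalues_neg_le_one_of_nonneg_on_ker (φ := LinearMap.proj p)
    fun _ hx => Matrix.dotProduct_mulVec_nonneg_of_apply_eq_zero hdiag hoff hx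
end

section
/- Let u : ℝ³ → ℝ be defined by u(x, y, t) = (x² + y²)eᵗ + (1/4)e^{−t} − eᵗ. Then at every point p ∈ ℝ³, the eigenvalues λ₁(p), λ₂(p), λ₃(p) of the (symmetric) Hessian matrix D²u(p) satisfy arctan λ₁(p) + arctan λ₂(p) + arctan λ₃(p) = π/2; that is, u is an entire solution of the special Lagrangian equation with critical phase θ = π/2 on ℝ³. -/
open Polynomial Real

theorem Matrix.IsHermitian.sum_map_eigenvalues_of_charpoly_eq {n : Type*} [Fintype n]
    [DecidableEq n] {A : Matrix n n ℝ} (hA : A.IsHermitian) {s : Multiset ℝ}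
    (hs : A.charpoly = (s.map fun r => X - C r).prod) (f : ℝ → ℝ) :
    ∑ i, f (hA.eigenvalues i) = (s.map f).sum := by
  have hroots : Finset.univ.val.map hA.eigenvalues = s := by
    simpa [hs] using hA.roots_charpoly_eq_eigenvalues.symm
  rw [← hroots, Multiset.map_map]
  rfl

theorem exists_add_eq_mul_eq_of_discrim_nonneg {s P : ℝ} (h : 0 ≤ s ^ 2 - 4 * P) :
    ∃ β γ : ℝ, β + γ = s ∧ β * γ = P := by
  refine ⟨(s + √(s ^ 2 - 4 * P)) / 2, (s - √(s ^ 2 - 4 * P)) / 2, by ring, ?_⟩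
  linear_combination (-1 / 4 : ℝ) * Real.sq_sqrt h

theorem Real.arctan_add_arctan_add_arctan_eq_pi_div_two {x y z : ℝ} (hx : 0 < x)
    (hyz : y * z < 1) (hσ₂ : x * y + y * z + z * x = 1) :
    arctan x + arctan y + arctan z = π / 2 := by
  have htan : (y + z) / (1 - y * z) = x⁻¹ := by
    rw [div_eq_iff (by linarith)]
    field_simp
    linarith
  rw [add_assoc, arctan_add hyz, htan, arctan_inv_of_pos hx]
  ring

namespace Matrix

theorem charpoly_bordered {R : Type*} [CommRing R] (d p q c : R) :
    (!![d, 0, p; 0, d, q; p, q, c]).charpoly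
      = (X - C d) * (X ^ 2 - C (d + c) * X + C (d * c - p ^ 2 - q ^ 2)) := by
  rw [charpoly, det_fin_three]
  simp
  ring

theorem isHermitian_bordered (d p q c : ℝ) : (!![d, 0, p; 0, d, q; p, q, c]).IsHermitian := by
  ext i j
  fin_cases i <;> fin_cases j <;> simp

theorem exists_sum_map_eigenvalues_bordered (d p q c : ℝ) (f : ℝ → ℝ) :
    ∃ β γ : ℝ, β + γ = d + c ∧ β * γ = d * c - p ^ 2 - q ^ 2 ∧
      ∑ i, f ((isHermitian_bordered d p q c).eigenvalues i) = f d + f β + f γ := by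
  obtain ⟨β, γ, hsum, hprod⟩ := exists_add_eq_mul_eq_of_discrim_nonneg (s := d + c)
    (P := d * c - p ^ 2 - q ^ 2) (by nlinarith [sq_nonneg (d - c), sq_nonneg p, sq_nonneg q])
  refine ⟨β, γ, hsum, hprod, ?_⟩
  rw [(isHermitian_bordered d p q c).sum_map_eigenvalues_of_charpoly_eq (s := {d, β, γ})]
  · simp only [Multiset.insert_eq_cons, Multiset.map_cons, Multiset.sum_cons,
      Multiset.map_singleton, Multiset.sum_singleton, add_assoc]
  · simp only [charpoly_bordered, ← hsum, ← hprod, Multiset.insert_eq_cons, Multiset.map_cons,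
      Multiset.prod_cons, Multiset.map_singleton, Multiset.prod_singleton, map_add, map_mul]
    ring

end Matrix

theorem hessian_explicit_solution (p : Fin 3 → ℝ) :
    hessian (fun v => (v 0 ^ 2 + v 1 ^ 2) * exp (v 2) + (1 / 4) * exp (-(v 2)) - exp (v 2)) p
      = !![2 * exp (p 2), 0, 2 * p 0 * exp (p 2);
          0, 2 * exp (p 2), 2 * p 1 * exp (p 2);
          2 * p 0 * exp (p 2), 2 * p 1 * exp (p 2),
            (p 0 ^ 2 + p 1 ^ 2 - 1) * exp (p 2) + exp (-p 2) / 4] := by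
  ext i j
  fin_cases i <;> fin_cases j <;>
    simp (disch := fun_prop) [hessian, fderiv_fun_add, fderiv_fun_sub, fderiv_fun_mul,
      fderiv_exp, fderiv_fun_pow, fderiv_fun_neg, fderiv_apply, Pi.single_apply] <;>
    ring

/-- The function `u(x, y, t) = (x² + y²)eᵗ + (1/4)e^{−t} − eᵗ` solves the special
Lagrangian equation with critical phase `θ = π/2` on `ℝ³`: at every point the arctangents
of the eigenvalues of its (symmetric) Hessian sum to `π/2`. -/
theorem explicit_solution_special_lagrangian (u : (Fin 3 → ℝ) → ℝ)
    (hu : u = fun v => (v 0 ^ 2 + v 1 ^ 2) * Real.exp (v 2)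
      + (1 / 4) * Real.exp (-(v 2)) - Real.exp (v 2)) :
    ∀ p : Fin 3 → ℝ, ∃ hsymm : (hessian u p).IsHermitian,
      ∑ i, Real.arctan (hsymm.eigenvalues i) = Real.pi / 2 := by
  intro p
  subst hu
  rw [hessian_explicit_solution]
  refine ⟨Matrix.isHermitian_bordered _ _ _ _, ?_⟩
  obtain ⟨β, γ, hsum, hprod, harctan⟩ := Matrix.exists_sum_map_eigenvalues_bordered _ _ _ _ arctan
  rw [harctan]
  have hE : 0 < exp (p 2) := exp_pos _
  have hEF : exp (p 2) * exp (-p 2) = 1 := by rw [← exp_add, add_neg_cancel, exp_zero]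
  apply arctan_add_arctan_add_arctan_eq_pi_div_two (by positivity)
  · nlinarith [sq_nonneg (p 0 * exp (p 2)), sq_nonneg (p 1 * exp (p 2))]
  · linear_combination (2 * exp (p 2)) * hsum + hprod + hEF
end
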